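/- arXiv:2102.06134 — 6 statements merged into one kernel-verified Lean document; each statement's English description precedes it below -/
import Mathlib

section
/- The n-permutahedron, defined as the convex hull of the points (σ(1), ..., σ(n)) in R^n over all permutations σ of [n], equals the Minkowski sum (n+1)/2 · (1,...,1) + Σ_{1 ≤ i < j ≤ n} [-(e_i - e_j)/2, (e_i - e_j)/2], where [p,q] denotes the segment between p and q and e_i are the standard basis vectors. -/
open scoped BigOperators Pointwise

/-- The standard basis vector `e_i` of `ℝ^n`. -/
noncomputable def stdBasis (n : ℕ) (i : Fin n) : Fin n → ℝ := Pi.single i 1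

/-!
For `i < j` put `h_ij = (e_i - e_j)/2`. The vertex of `σ` is the center plus `Σ_{i<j} ±h_ij`,
the sign being `+` exactly when `σ j < σ i`: in coordinate `k` this sum counts the `j` with
`σ j < σ k` minus those with `σ j > σ k`, halved. As the Minkowski sum is convex, this gives `⊆`.
Conversely, a linear functional `f` is maximised on a sum of segments by taking on each segment
the endpoint where `f` is larger, and for a permutation `σ` along which `f (e_i)` is monotone this
is exactly the endpoint chosen by `σ`. So `f` is bounded on the Minkowski sum by its value at a
vertex, and Hahn–Banach separation from the closed convex hull gives `⊇`.
-/

open Finset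

theorem Finset.two_nsmul_sum_filter_fst_lt_snd {ι M : Type*} [Fintype ι] [LinearOrder ι]
    [AddCommMonoid M] (g : ι → ι → M) (hsymm : ∀ i j, g i j = g j i) (hdiag : ∀ i, g i i = 0) :
    2 • ∑ p ∈ univ.filter (fun p : ι × ι => p.1 < p.2), g p.1 p.2 = ∑ i, ∑ j, g i j := by
  have hsplit : ∀ p : ι × ι, g p.1 p.2 =
      (if p.1 < p.2 then g p.1 p.2 else 0) + (if p.2 < p.1 then g p.2 p.1 else 0) := by
    rintro ⟨i, j⟩
    rcases lt_trichotomy i j with h | rfl | h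
    · simp [h, h.not_gt]
    · simp [hdiag]
    · simp [h, h.not_gt, hsymm]
  rw [← Fintype.sum_prod_type', Fintype.sum_congr _ _ hsplit, sum_add_distrib,
    ← Equiv.sum_comp (Equiv.prodComm ι ι) (fun p => if p.2 < p.1 then g p.2 p.1 else 0),
    sum_filter, two_nsmul]
  rfl

theorem map_le_map_sum_of_mem_finsetSum {ι E F G : Type*} [AddCommMonoid E] [AddCommMonoid F]
    [PartialOrder F] [IsOrderedAddMonoid F] [FunLike G E F] [AddMonoidHomClass G E F] (f : G)
    {s : Finset ι} {S : ι → Set E} {w : ι → E} (hw : ∀ i ∈ s, ∀ y ∈ S i, f y ≤ f (w i))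
    {y : E} (hy : y ∈ ∑ i ∈ s, S i) : f y ≤ f (∑ i ∈ s, w i) := by
  obtain ⟨g, hg, rfl⟩ := (Set.mem_finsetSum s S y).1 hy
  rw [map_sum, map_sum]
  exact sum_le_sum fun i hi => hw i hi _ (hg hi)

theorem mem_convexHull_of_forall_exists_le {E : Type*} [TopologicalSpace E] [AddCommGroup E]
    [Module ℝ E] [IsTopologicalAddGroup E] [ContinuousSMul ℝ E] [LocallyConvexSpace ℝ E]
    {s : Set E} (hs : IsClosed (convexHull ℝ s)) {x : E}
    (h : ∀ f : StrongDual ℝ E, ∃ y ∈ s, f x ≤ f y) : x ∈ convexHull ℝ s := by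
  by_contra hx
  obtain ⟨f, u, hfu, hux⟩ := geometric_hahn_banach_closed_point (convex_convexHull ℝ s) hs hx
  obtain ⟨y, hy, hxy⟩ := h f
  linarith [hfu y (subset_convexHull ℝ s hy)]

theorem Tuple.exists_perm_le_imp_le {n : ℕ} {α : Type*} [LinearOrder α] (c : Fin n → α) :
    ∃ σ : Equiv.Perm (Fin n), ∀ i j, σ i ≤ σ j → c i ≤ c j :=
  ⟨(Tuple.sort c)⁻¹, fun i j hij => by simpa using Tuple.monotone_sort c hij⟩

section Counting

variable {R : Type*} [CommRing R]

theorem Finset.sum_ite_one_neg_one {α : Type*} (s : Finset α) (p : α → Prop) [DecidablePred p] :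
    ∑ x ∈ s, (if p x then (1 : R) else -1) = 2 * #(s.filter p) - #s := by
  rw [sum_ite, Finset.sum_const, Finset.sum_const, ← card_filter_add_card_filter_not (s := s) p]
  push_cast
  ring

theorem Fin.sum_ite_lt_one_neg_one {n : ℕ} (a : Fin n) :
    ∑ m : Fin n, (if m < a then (1 : R) else -1) = 2 * a - n := by
  rw [sum_ite_one_neg_one, filter_gt_eq_Iio, card_Iio, card_univ, Fintype.card_fin]

theorem Fin.sum_ite_gt_one_neg_one {n : ℕ} (a : Fin n) :
    ∑ m : Fin n, (if a < m then (1 : R) else -1) = n - 2 * a - 2 := by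
  have hcard : ((#(Ioi a) + a + 1 : ℕ) : R) = n := by
    rw [card_Ioi]
    congr 1
    omega
  rw [sum_ite_one_neg_one, filter_lt_eq_Ioi, card_univ, Fintype.card_fin, ← hcard]
  push_cast
  ring

end Counting

namespace Permutahedron

variable {n : ℕ}

noncomputable def vertex (σ : Equiv.Perm (Fin n)) : Fin n → ℝ := fun i => (σ i : ℕ) + 1

noncomputable def center (n : ℕ) : Fin n → ℝ := fun _ => ((n : ℝ) + 1) / 2

noncomputable def halfEdge (i j : Fin n) : Fin n → ℝ := (2 : ℝ)⁻¹ • (stdBasis n i - stdBasis n j)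

noncomputable def orientedHalfEdge (σ : Equiv.Perm (Fin n)) (i j : Fin n) : Fin n → ℝ :=
  if σ j < σ i then halfEdge i j else -halfEdge i j

theorem orientedHalfEdge_mem_segment (σ : Equiv.Perm (Fin n)) (i j : Fin n) :
    orientedHalfEdge σ i j ∈ segment ℝ (-halfEdge i j) (halfEdge i j) := by
  unfold orientedHalfEdge
  split_ifs
  · exact right_mem_segment ℝ _ _
  · exact left_mem_segment ℝ _ _

theorem halfEdge_swap (i j : Fin n) : halfEdge j i = -halfEdge i j := by
  rw [halfEdge, halfEdge, ← smul_neg, neg_sub]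

theorem orientedHalfEdge_comm (σ : Equiv.Perm (Fin n)) (i j : Fin n) :
    orientedHalfEdge σ i j = orientedHalfEdge σ j i := by
  rcases eq_or_ne i j with rfl | hij
  · rfl
  rcases (σ.injective.ne hij).lt_or_gt with h | h <;>
    simp [orientedHalfEdge, h, h.not_gt, halfEdge_swap j i]

theorem orientedHalfEdge_apply (σ : Equiv.Perm (Fin n)) (i j k : Fin n) :
    orientedHalfEdge σ i j k =
      2⁻¹ * ((if k = i then (if σ j < σ i then 1 else -1) else 0) -
        (if k = j then (if σ j < σ i then 1 else -1) else 0)) := by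
  unfold orientedHalfEdge halfEdge stdBasis
  split_ifs <;> simp_all

theorem orientedHalfEdge_self (σ : Equiv.Perm (Fin n)) (i : Fin n) :
    orientedHalfEdge σ i i = 0 := by
  simp [orientedHalfEdge, halfEdge]

theorem sum_orientedHalfEdge_apply (σ : Equiv.Perm (Fin n)) (k : Fin n) :
    (∑ i, ∑ j, orientedHalfEdge σ i j) k = 2 * (σ k : ℕ) - n + 1 := by
  simp only [Finset.sum_apply, orientedHalfEdge_apply, ← mul_sum, sum_sub_distrib]
  rw [sum_comm]
  simp only [sum_ite_eq, mem_univ, if_true]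
  rw [Equiv.sum_comp σ (fun m => if m < σ k then (1 : ℝ) else -1),
    Equiv.sum_comp σ (fun m => if σ k < m then (1 : ℝ) else -1),
    Fin.sum_ite_lt_one_neg_one, Fin.sum_ite_gt_one_neg_one]
  ring

theorem vertex_eq_center_add_sum (σ : Equiv.Perm (Fin n)) :
    vertex σ = center n +
      ∑ p ∈ univ.filter (fun p : Fin n × Fin n => p.1 < p.2), orientedHalfEdge σ p.1 p.2 := by
  funext k
  have h := congrFun (two_nsmul_sum_filter_fst_lt_snd _ (orientedHalfEdge_comm σ)
    (orientedHalfEdge_self σ)) k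
  rw [sum_orientedHalfEdge_apply, two_nsmul, Pi.add_apply] at h
  simp only [vertex, center, Pi.add_apply]
  linarith

theorem map_le_map_orientedHalfEdge (f : (Fin n → ℝ) →ₗ[ℝ] ℝ) {σ : Equiv.Perm (Fin n)}
    (hσ : ∀ i j, σ i ≤ σ j → f (stdBasis n i) ≤ f (stdBasis n j)) (i j : Fin n) {y : Fin n → ℝ}
    (hy : y ∈ segment ℝ (-halfEdge i j) (halfEdge i j)) :
    f y ≤ f (orientedHalfEdge σ i j) := by
  have hmax := (f.convexOn convex_univ).le_max_of_mem_segment trivial trivial hy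
  have hf : f (halfEdge i j) = 2⁻¹ * (f (stdBasis n i) - f (stdBasis n j)) := by
    simp [halfEdge]
  rw [map_neg, hf] at hmax
  unfold orientedHalfEdge
  split_ifs with h
  · have := hσ j i h.le
    rw [hf]
    exact hmax.trans (max_le (by linarith) le_rfl)
  · have := hσ i j (not_lt.1 h)
    rw [map_neg, hf]
    exact hmax.trans (max_le le_rfl (by linarith))

end Permutahedron

open Permutahedron in
/-- The `n`-permutahedron `conv{(σ(1),…,σ(n)) : σ ∈ S_n}` equals the Minkowski sum
`(n+1)/2 · (1,…,1) + Σ_{i<j} [-(e_i-e_j)/2, (e_i-e_j)/2]`. -/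
theorem permutahedron_eq_minkowski (n : ℕ) :
    convexHull ℝ {x : Fin n → ℝ | ∃ σ : Equiv.Perm (Fin n), ∀ i, x i = (σ i : ℕ) + 1} =
    ({fun _ => ((n : ℝ) + 1) / 2} : Set (Fin n → ℝ)) +
      ∑ p ∈ Finset.univ.filter (fun p : Fin n × Fin n => p.1 < p.2),
        segment ℝ (-(((2 : ℝ)⁻¹) • (stdBasis n p.1 - stdBasis n p.2)))
          (((2 : ℝ)⁻¹) • (stdBasis n p.1 - stdBasis n p.2)) := by
  have hvertices : {x : Fin n → ℝ | ∃ σ : Equiv.Perm (Fin n), ∀ i, x i = (σ i : ℕ) + 1} =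
      Set.range vertex := by
    ext x
    simp [vertex, funext_iff, eq_comm]
  rw [hvertices]
  change _ = {center n} + ∑ p ∈ univ.filter (fun p : Fin n × Fin n => p.1 < p.2),
    segment ℝ (-halfEdge p.1 p.2) (halfEdge p.1 p.2)
  refine (convexHull_min ?_ ?_).antisymm fun x hx => ?_
  · rintro _ ⟨σ, rfl⟩
    rw [vertex_eq_center_add_sum]
    exact Set.add_mem_add rfl
      (Set.finsetSum_mem_finsetSum _ _ _ fun p _ => orientedHalfEdge_mem_segment σ p.1 p.2)
  · exact (convex_singleton _).add (convex_sum _ fun p _ => convex_segment _ _)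
  · refine mem_convexHull_of_forall_exists_le
      ((Set.finite_range vertex).isClosed_convexHull (𝕜 := ℝ)) fun f => ?_
    obtain ⟨σ, hσ⟩ := Tuple.exists_perm_le_imp_le fun i => f (stdBasis n i)
    obtain ⟨c, rfl, z, hz, rfl⟩ := hx
    refine ⟨vertex σ, Set.mem_range_self σ, ?_⟩
    rw [vertex_eq_center_add_sum, map_add, map_add]
    gcongr
    exact map_le_map_sum_of_mem_finsetSum f
      (fun p _ _ => map_le_map_orientedHalfEdge f.toLinearMap hσ p.1 p.2) hz
end

section
/- For a point configuration A = (a_1, ..., a_n) in R^d with linear map φ_A : R^n → R^d sending e_i to a_i, the map sending an ordered partition I of [n] (given by the surjection p_I : [n] → [l]) to the sign vector X^I ∈ {+,-,0}^{E_n} with X^I_{(i,j)} = sign(p_I(j) - p_I(i)) is an order-preserving bijection (poset isomorphism) between the poset of sweeps of A ordered by refinement and the poset of covectors of the oriented matroid of the vector configuration (a_j - a_i)_{(i,j) ∈ E_n} ordered componentwise with 0 < +, 0 < -. -/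
/-! The sign vector `X^I` only records how `p_I` compares pairs of elements, and a sweep
compares them exactly as the functional `⟪u, ·⟫` inducing it does; hence `X^I` is the covector
of `u`. An ordered partition is determined by its comparison relation (injectivity), the level
sets of any functional can be listed in increasing order (surjectivity), and `J` refines `I`
exactly when `p_J(i) ≤ p_J(j)` forces `p_I(i) ≤ p_I(j)`, which is what `X^I ≼ X^J` says
pair by pair. -/

open scoped BigOperators

/-- An ordered partition of `[n]` with `parts` parts, given by the associated
surjection to `Fin parts`. -/
structure OrderedPartition (n : ℕ) where
  parts : ℕ
  toFun : Fin n → Fin parts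
  surj : Function.Surjective toFun

/-- `Refines I J` : `J` refines `I`, i.e. each part of `I` is a union of consecutive
parts of `J` (there is a monotone map collapsing `J` onto `I`). -/
def Refines {n : ℕ} (I J : OrderedPartition n) : Prop :=
  ∃ q : Fin J.parts → Fin I.parts, Monotone q ∧ ∀ i, I.toFun i = q (J.toFun i)

/-- The set `E_n = {(i,j) : 1 ≤ i < j ≤ n}`. -/
abbrev Pairs (n : ℕ) := {p : Fin n × Fin n // p.1 < p.2}

/-- The sign vector `X^I` associated to an ordered partition `I`. -/
def toSign {n : ℕ} (I : OrderedPartition n) : Pairs n → SignType := fun e =>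
  if I.toFun e.1.1 < I.toFun e.1.2 then 1
  else if I.toFun e.1.2 < I.toFun e.1.1 then -1 else 0

/-- Euclidean scalar product on `ℝ^d`. -/
def dotR {d : ℕ} (u v : Fin d → ℝ) : ℝ := ∑ i, u i * v i

/-- `I` is a sweep of the configuration `A`: `I` is the ordered partition induced by
the ordered level sets of some linear functional `⟪u, ·⟫`. -/
def IsSweep {n d : ℕ} (A : Fin n → Fin d → ℝ) (I : OrderedPartition n) : Prop :=
  ∃ u : Fin d → ℝ, ∀ i j : Fin n, I.toFun i ≤ I.toFun j ↔ dotR u (A i) ≤ dotR u (A j)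

/-- Covector of the realizable oriented matroid of the vector configuration
`(a_j - a_i)_{(i,j) ∈ E_n}`: the sign vector of evaluations of a linear functional. -/
def IsCovectorOfDiffs {n d : ℕ} (A : Fin n → Fin d → ℝ) (X : Pairs n → SignType) : Prop :=
  ∃ u : Fin d → ℝ, ∀ e : Pairs n,
    X e = if dotR u (A e.1.1) < dotR u (A e.1.2) then 1
      else if dotR u (A e.1.2) < dotR u (A e.1.1) then -1 else 0

/-- The componentwise partial order on sign vectors, induced by `0 ≺ +` and `0 ≺ -`. -/
def covLE {E : Type*} (X Y : E → SignType) : Prop := ∀ e, X e = 0 ∨ X e = Y e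

section CmpSign

variable {α β : Type*} [LinearOrder α] [LinearOrder β]

def cmpSign (a b : α) : SignType :=
  if a < b then 1 else if b < a then -1 else 0

theorem cmpSign_eq_zero_or_eq_iff (a b : α) (c d : β) :
    (cmpSign a b = 0 ∨ cmpSign a b = cmpSign c d) ↔ (c ≤ d → a ≤ b) ∧ (d ≤ c → b ≤ a) := by
  unfold cmpSign
  split_ifs <;> grind

end CmpSign

theorem covLE_antisymm {E : Type*} {X Y : E → SignType} (hXY : covLE X Y) (hYX : covLE Y X) :
    X = Y := by
  grind [covLE]

theorem exists_monotone_apply_eq {ι α β : Type*} [Preorder α] [PartialOrder β]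
    {f : ι → α} {g : ι → β} (hf : Function.Surjective f) (h : ∀ i j, f i ≤ f j → g i ≤ g j) :
    ∃ q : α → β, Monotone q ∧ ∀ i, q (f i) = g i := by
  refine ⟨g ∘ Function.surjInv hf, fun v w hvw => h _ _ ?_, fun i => ?_⟩
  · simpa only [Function.surjInv_eq hf] using hvw
  · have := Function.surjInv_eq hf (f i)
    exact le_antisymm (h _ _ this.le) (h _ _ this.ge)

theorem exists_orderIso_apply_eq {ι α β : Type*} [LinearOrder α] [LinearOrder β]
    {f : ι → α} {g : ι → β} (hf : Function.Surjective f) (hg : Function.Surjective g)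
    (h : ∀ i j, f i ≤ f j ↔ g i ≤ g j) : ∃ e : α ≃o β, ∀ i, e (f i) = g i := by
  obtain ⟨q, -, hq⟩ := exists_monotone_apply_eq hf fun i j => (h i j).1
  have hq_strictMono : StrictMono q := by
    intro v w hvw
    obtain ⟨i, rfl⟩ := hf v
    obtain ⟨j, rfl⟩ := hf w
    rwa [hq, hq, ← not_le, ← h, not_le]
  refine ⟨hq_strictMono.orderIsoOfSurjective q fun b => ?_, hq⟩
  obtain ⟨i, rfl⟩ := hg b
  exact ⟨f i, hq i⟩

section PairSign

variable {n : ℕ} {α β : Type*} [LinearOrder α] [LinearOrder β]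

def pairSign (f : Fin n → α) : Pairs n → SignType := fun e => cmpSign (f e.1.1) (f e.1.2)

theorem covLE_pairSign_iff (f : Fin n → α) (g : Fin n → β) :
    covLE (pairSign f) (pairSign g) ↔ ∀ i j, g i ≤ g j → f i ≤ f j := by
  simp only [covLE, pairSign, cmpSign_eq_zero_or_eq_iff]
  refine ⟨fun h i j hij => ?_, fun h e => ⟨h _ _, h _ _⟩⟩
  rcases lt_trichotomy i j with hlt | rfl | hgt
  · exact (h ⟨(i, j), hlt⟩).1 hij
  · exact le_rfl
  · exact (h ⟨(j, i), hgt⟩).2 hij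

theorem pairSign_eq_pairSign_iff (f : Fin n → α) (g : Fin n → β) :
    pairSign f = pairSign g ↔ ∀ i j, f i ≤ f j ↔ g i ≤ g j := by
  refine ⟨fun h i j => ⟨?_, ?_⟩, fun h => covLE_antisymm ?_ ?_⟩
  · exact (covLE_pairSign_iff g f).1 (h ▸ fun _ => Or.inr rfl) i j
  · exact (covLE_pairSign_iff f g).1 (h ▸ fun _ => Or.inr rfl) i j
  · exact (covLE_pairSign_iff f g).2 fun i j => (h i j).2
  · exact (covLE_pairSign_iff g f).2 fun i j => (h i j).1

end PairSign

namespace OrderedPartition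

variable {n : ℕ}

theorem ext_of_le_iff {I J : OrderedPartition n}
    (h : ∀ i j, I.toFun i ≤ I.toFun j ↔ J.toFun i ≤ J.toFun j) : I = J := by
  obtain ⟨e, he⟩ := exists_orderIso_apply_eq I.surj J.surj h
  obtain ⟨p, f, hf⟩ := I
  obtain ⟨q, g, hg⟩ := J
  obtain rfl : p = q := by simpa using Fintype.card_congr e.toEquiv
  obtain rfl : e = OrderIso.refl _ := Subsingleton.elim _ _
  obtain rfl : f = g := funext he
  rfl

theorem exists_le_iff {α : Type*} [LinearOrder α] (f : Fin n → α) :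
    ∃ I : OrderedPartition n, ∀ i j, I.toFun i ≤ I.toFun j ↔ f i ≤ f j := by
  classical
  let e := monoEquivOfFin (Set.range f) rfl
  refine ⟨⟨_, e.symm ∘ Set.rangeFactorization f,
    e.symm.surjective.comp Set.rangeFactorization_surjective⟩, fun i j => ?_⟩
  exact e.symm.le_iff_le

theorem refines_iff (I J : OrderedPartition n) :
    Refines I J ↔ ∀ i j, J.toFun i ≤ J.toFun j → I.toFun i ≤ I.toFun j := by
  refine ⟨fun ⟨q, hq, hIJ⟩ i j hij => ?_, fun h => ?_⟩
  · rw [hIJ, hIJ]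
    exact hq hij
  obtain ⟨q, hq, hqJ⟩ := exists_monotone_apply_eq J.surj h
  exact ⟨q, hq, fun i => (hqJ i).symm⟩

end OrderedPartition

section Sweeps

variable {n d : ℕ} {A : Fin n → Fin d → ℝ}

theorem isCovectorOfDiffs_iff {X : Pairs n → SignType} :
    IsCovectorOfDiffs A X ↔ ∃ u, X = pairSign fun i => dotR u (A i) :=
  exists_congr fun _ => funext_iff.symm

theorem toSign_injective : Function.Injective (toSign : OrderedPartition n → Pairs n → SignType) :=
  fun _ _ h => OrderedPartition.ext_of_le_iff ((pairSign_eq_pairSign_iff _ _).1 h)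

theorem refines_iff_covLE_toSign (I J : OrderedPartition n) :
    Refines I J ↔ covLE (toSign I) (toSign J) :=
  (OrderedPartition.refines_iff I J).trans (covLE_pairSign_iff _ _).symm

theorem IsSweep.isCovectorOfDiffs_toSign {I : OrderedPartition n} (hI : IsSweep A I) :
    IsCovectorOfDiffs A (toSign I) :=
  let ⟨u, hu⟩ := hI
  isCovectorOfDiffs_iff.2 ⟨u, (pairSign_eq_pairSign_iff _ _).2 hu⟩

theorem IsCovectorOfDiffs.exists_isSweep_toSign_eq {X : Pairs n → SignType}
    (hX : IsCovectorOfDiffs A X) : ∃ I, IsSweep A I ∧ toSign I = X := by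
  obtain ⟨u, rfl⟩ := isCovectorOfDiffs_iff.1 hX
  obtain ⟨I, hI⟩ := OrderedPartition.exists_le_iff fun i => dotR u (A i)
  exact ⟨I, ⟨u, hI⟩, (pairSign_eq_pairSign_iff _ _).2 hI⟩

end Sweeps

/-- The map `I ↦ X^I` is a poset isomorphism between the poset of sweeps of `A`
ordered by refinement and the poset of covectors of the oriented matroid of the
differences `(a_j - a_i)` ordered componentwise. -/
theorem sweeps_orderIso_covectors {n d : ℕ} (A : Fin n → Fin d → ℝ) :
    ∃ φ : {I : OrderedPartition n // IsSweep A I} ≃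
        {X : Pairs n → SignType // IsCovectorOfDiffs A X},
      (∀ I, (φ I).1 = toSign I.1) ∧
      (∀ I J, Refines I.1 J.1 ↔ covLE ((φ I).1) ((φ J).1)) := by
  let φ : {I : OrderedPartition n // IsSweep A I} → {X // IsCovectorOfDiffs A X} :=
    fun I => ⟨toSign I.1, I.2.isCovectorOfDiffs_toSign⟩
  have hφ : Function.Bijective φ := by
    refine ⟨fun I J h => Subtype.ext (toSign_injective (congrArg Subtype.val h)), ?_⟩
    rintro ⟨X, hX⟩
    obtain ⟨I, hI, rfl⟩ := hX.exists_isSweep_toSign_eq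
    exact ⟨⟨I, hI⟩, rfl⟩
  exact ⟨Equiv.ofBijective φ hφ, fun _ => rfl, fun I J => refines_iff_covLE_toSign I.1 J.1⟩
end

section
/- Let M be an oriented matroid on the ground set E_n = {(i,j) : 1 ≤ i < j ≤ n}. Every covector of M is a covector of the braid oriented matroid (the oriented matroid of the vectors e_j - e_i for (i,j) ∈ E_n) if and only if for every covector X of M and every triple 1 ≤ i < j < k ≤ n, the triple (X_{(i,j)}, X_{(j,k)}, X_{(i,k)}) is orthogonal to the sign vector (+,+,-), i.e., it avoids the fourteen patterns (+,+,-), (-,-,+), (0,+,-), (0,-,+), (+,0,-), (-,0,+), (+,+,0), (-,-,0), (0,0,-), (0,0,+), (0,+,0), (0,-,0), (+,0,0), (-,0,0). -/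
/-- Composition of sign vectors: `(X ∘ Y)_e = X_e` if `X_e ≠ 0`, else `Y_e`. -/
def signComp {E : Type*} (X Y : E → SignType) : E → SignType :=
  fun e => if X e = 0 then Y e else X e

/-- The covector axioms for oriented matroids: (V0) the zero vector belongs, (V1)
closure under negation, (V2) closure under composition, (V3) covector elimination. -/
def IsOrientedMatroid {E : Type*} (C : Set (E → SignType)) : Prop :=
  (fun _ => 0) ∈ C ∧
  (∀ X ∈ C, -X ∈ C) ∧
  (∀ X ∈ C, ∀ Y ∈ C, signComp X Y ∈ C) ∧
  (∀ X ∈ C, ∀ Y ∈ C, ∀ e, X e ≠ 0 → X e = -Y e →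
    ∃ Z ∈ C, Z e = 0 ∧ ∀ f, ¬(X f ≠ 0 ∧ X f = -Y f) → Z f = signComp X Y f)

/-- A covector of the braid oriented matroid on `E_n`: the sign vector obtained from
an ordered partition of `[n]` (given by a surjection `p`) via
`X_{(i,j)} = sign (p j - p i)`. -/
def IsBraidCovector {n : ℕ} (X : Pairs n → SignType) : Prop :=
  ∃ (l : ℕ) (p : Fin n → Fin l), Function.Surjective p ∧
    ∀ e : Pairs n, X e =
      if p e.1.1 < p e.1.2 then 1 else if p e.1.2 < p e.1.1 then -1 else 0

/-- The covectors `X^k` of the big oriented matroid of a sweep oriented matroid, on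
the ground set `[n] ∪ E_n`: for each covector `X`, with associated surjection
`p : [n] → [l]` (values of `p` are shifted by one to match the paper's `p_X : [n] → [l]`),
and each `1 ≤ k ≤ 2l+1`, the sign vector which is `-` on `i` with `p_X(i) ≤ ⌊(k-1)/2⌋`,
`+` on `i` with `p_X(i) > ⌊k/2⌋`, `0` on the remaining `i` (only for `k` even, where
`p_X(i) = k/2`), and agrees with `X` on `E_n`. -/
def BigCovectors {n : ℕ} (C : Set (Pairs n → SignType)) :
    Set ((Fin n ⊕ Pairs n) → SignType) :=
  { Z | ∃ X ∈ C, ∃ (l : ℕ) (p : Fin n → Fin l), Function.Surjective p ∧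
      (∀ e : Pairs n, X e =
        if p e.1.1 < p e.1.2 then 1 else if p e.1.2 < p e.1.1 then -1 else 0) ∧
      ∃ k : ℕ, 1 ≤ k ∧ k ≤ 2 * l + 1 ∧
        (∀ i : Fin n, Z (Sum.inl i) =
          if (p i : ℕ) + 1 ≤ (k - 1) / 2 then -1
          else if k / 2 < (p i : ℕ) + 1 then 1 else 0) ∧
        (∀ e : Pairs n, Z (Sum.inr e) = X e) }

/-- The little oriented matroid of a sweep oriented matroid: the restriction of its
big oriented matroid to the ground set `[n]`. -/
def LittleCovectors {n : ℕ} (C : Set (Pairs n → SignType)) : Set (Fin n → SignType) :=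
  { Y | ∃ Z ∈ BigCovectors C, ∀ i, Y i = Z (Sum.inl i) }

/-- There is a chain of `r+1` distinct covectors in the conformal order. -/
def HasChain {E : Type*} (C : Set (E → SignType)) (r : ℕ) : Prop :=
  ∃ c : Fin (r + 1) → (E → SignType), (∀ i, c i ∈ C) ∧
    ∀ i j : Fin (r + 1), i < j → covLE (c i) (c j) ∧ c i ≠ c j

/-- The set of covectors has rank `r`: maximal chains in the poset of covectors have
length `r`. -/
def HasRank {E : Type*} (C : Set (E → SignType)) (r : ℕ) : Prop :=
  HasChain C r ∧ ¬ HasChain C (r + 1)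

/-- Restriction of a set of covectors to a subset `F` of the ground set. -/
def restrictSet {E : Type*} (C : Set (E → SignType)) (F : Set E) : Set (F → SignType) :=
  { Y | ∃ X ∈ C, ∀ e : F, Y e = X e.1 }

/-- A flat of an oriented matroid: the zero set of a covector. -/
def IsFlat {E : Type*} (C : Set (E → SignType)) (F : Set E) : Prop :=
  ∃ X ∈ C, F = {e | X e = 0}

/-- Orthogonality of sign vectors: supports disjoint, or the restrictions to the common
support are neither equal nor opposite (there are coordinates where they agree and
coordinates where they are opposite, both nonzero). -/
def SignOrth {α : Type*} (f g : α → SignType) : Prop :=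
  (∀ a, f a = 0 ∨ g a = 0) ∨
  ((∃ a, f a ≠ 0 ∧ f a = g a) ∧ (∃ a, g a ≠ 0 ∧ f a = -g a))

/-- Covector of the braid oriented matroid realized by the vectors `e_j - e_i`,
`(i,j) ∈ E_n`: the sign vector `(sign(u_j - u_i))_{(i,j)}` of some `u ∈ ℝ^n`. -/
def IsRealizableBraidCovector {n : ℕ} (X : Pairs n → SignType) : Prop :=
  ∃ u : Fin n → ℝ, ∀ e : Pairs n,
    X e = if u e.1.1 < u e.1.2 then 1 else if u e.1.2 < u e.1.1 then -1 else 0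

/-!
The transitivity condition on `(X_{ij}, X_{jk}, X_{ik})` says exactly that this triple is a
possible value of `(sgn (y - x), sgn (z - y), sgn (z - x))`. The set of such triples is stable
under permuting `x, y, z`, so the skew-symmetric extension of `X` to all pairs satisfies the
condition for every triple, i.e. it is the comparison sign of a total preorder on `[n]`.
Such a preorder is realized by `u i = #{c | c is strictly below i}`.
-/

/-- The sign of `y - x`, in the `if` form used by `IsRealizableBraidCovector`. -/
def signCmp {α : Type*} [LinearOrder α] (x y : α) : SignType :=
  if x < y then 1 else if y < x then -1 else 0

/-- The triples `(sgn (y - x), sgn (z - y), sgn (z - x))`. -/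
def SignTransitive (a b c : SignType) : Prop :=
  (a = 0 → c = b) ∧ (b = 0 → c = a) ∧ (a = 1 → b = 1 → c = 1) ∧ (a = -1 → b = -1 → c = -1)

namespace SignTransitive

theorem eq_of_right_zero {a b c : SignType} (h : SignTransitive a b c) (hb : b = 0) : c = a :=
  h.2.1 hb

theorem eq_one_of_eq_one {a b c : SignType} (h : SignTransitive a b c) (ha : a = 1)
    (hb : b = 1) : c = 1 :=
  h.2.2.1 ha hb

theorem zero_left (b : SignType) : SignTransitive 0 b b := by
  revert b; unfold SignTransitive; decide

theorem zero_right (a : SignType) : SignTransitive a 0 a := by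
  revert a; unfold SignTransitive; decide

theorem neg_zero (a : SignType) : SignTransitive a (-a) 0 := by
  revert a; unfold SignTransitive; decide

theorem swap_left {a b c : SignType} (h : SignTransitive a b c) :
    SignTransitive (-a) c b := by
  revert a b c; unfold SignTransitive; decide

theorem swap_right {a b c : SignType} (h : SignTransitive a b c) :
    SignTransitive c (-b) a := by
  revert a b c; unfold SignTransitive; decide

end SignTransitive

theorem signOrth_iff_signTransitive (a b c : SignType) :
    SignOrth ![a, b, c] ![1, 1, -1] ↔ SignTransitive a b c := by
  revert a b c; unfold SignOrth SignTransitive; decide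

theorem signTransitive_signCmp {α : Type*} [LinearOrder α] (x y z : α) :
    SignTransitive (signCmp x y) (signCmp y z) (signCmp x z) := by
  unfold SignTransitive signCmp
  split_ifs <;> first | decide | (exfalso; order)

section Skew

variable {α : Type*} {s : α → α → SignType}

theorem skew_self (hs : ∀ i j, s j i = -s i j) (i : α) : s i i = 0 := by
  have h := hs i i
  revert h; generalize s i i = a; revert a; decide

theorem signTransitive_of_lt [LinearOrder α] (hs : ∀ i j, s j i = -s i j)
    (hlt : ∀ i j k, i < j → j < k → SignTransitive (s i j) (s j k) (s i k)) (i j k : α) :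
    SignTransitive (s i j) (s j k) (s i k) := by
  have swap₁ : ∀ {a b c}, SignTransitive (s a b) (s b c) (s a c) →
      SignTransitive (s b a) (s a c) (s b c) := fun {a b _} h => by
    rw [hs a b]; exact h.swap_left
  have swap₂ : ∀ {a b c}, SignTransitive (s a b) (s b c) (s a c) →
      SignTransitive (s a c) (s c b) (s a b) := fun {_ b c} h => by
    rw [hs b c]; exact h.swap_right
  rcases eq_or_ne i j with rfl | hij
  · rw [skew_self hs]; exact .zero_left _
  rcases eq_or_ne j k with rfl | hjk
  · rw [skew_self hs]; exact .zero_right _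
  rcases eq_or_ne i k with rfl | hik
  · rw [skew_self hs, hs _ j]; exact .neg_zero _
  rcases hij.lt_or_gt with hij | hji <;> rcases hjk.lt_or_gt with hjk | hkj <;>
    rcases hik.lt_or_gt with hik | hki
  · exact hlt i j k hij hjk
  · exact absurd (hij.trans hjk) hki.not_gt
  · exact swap₂ (hlt i k j hik hkj)
  · exact swap₂ (swap₁ (hlt k i j hki hij))
  · exact swap₁ (hlt j i k hji hik)
  · exact swap₁ (swap₂ (hlt j k i hjk hki))
  · exact absurd (hkj.trans hji) hik.not_gt
  · exact swap₁ (swap₂ (swap₁ (hlt k j i hkj hji)))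

def rankBelow [Fintype α] (s : α → α → SignType) (i : α) : ℕ :=
  (Finset.univ.filter fun c => s c i = 1).card

theorem rankBelow_lt [Fintype α] (hs : ∀ i j, s j i = -s i j)
    (ht : ∀ i j k, SignTransitive (s i j) (s j k) (s i k)) {a b : α} (hab : s a b = 1) :
    rankBelow s a < rankBelow s b := by
  unfold rankBelow
  refine Finset.card_lt_card ⟨fun c hc => ?_, fun hsub => ?_⟩
  · simp only [Finset.mem_filter, Finset.mem_univ, true_and] at hc ⊢
    exact (ht c a b).eq_one_of_eq_one hc hab
  · simpa [skew_self hs] using hsub (Finset.mem_filter.2 ⟨Finset.mem_univ a, hab⟩)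

theorem rankBelow_eq [Fintype α] (ht : ∀ i j k, SignTransitive (s i j) (s j k) (s i k))
    {a b : α} (hab : s a b = 0) : rankBelow s a = rankBelow s b := by
  unfold rankBelow
  congr 1
  exact Finset.filter_congr fun c _ => by rw [(ht c a b).eq_of_right_zero hab]

theorem eq_signCmp_rankBelow [Fintype α] (hs : ∀ i j, s j i = -s i j)
    (ht : ∀ i j k, SignTransitive (s i j) (s j k) (s i k)) (a b : α) :
    s a b = signCmp (rankBelow s a) (rankBelow s b) := by
  obtain h | h | h := SignType.trichotomy (s a b)
  · have hba : s b a = 1 := by rw [hs, h]; rfl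
    have hlt := rankBelow_lt hs ht hba
    rw [h, signCmp, if_neg hlt.not_gt, if_pos hlt]
  · rw [h, rankBelow_eq ht h, signCmp, if_neg (lt_irrefl _), if_neg (lt_irrefl _)]
  · rw [h, signCmp, if_pos (rankBelow_lt hs ht h)]

end Skew

def skewExtend {n : ℕ} (X : Pairs n → SignType) (i j : Fin n) : SignType :=
  if h : i < j then X ⟨(i, j), h⟩ else if h' : j < i then -X ⟨(j, i), h'⟩ else 0

theorem skewExtend_of_lt {n : ℕ} (X : Pairs n → SignType) {i j : Fin n} (h : i < j) :
    skewExtend X i j = X ⟨(i, j), h⟩ :=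
  dif_pos h

theorem skewExtend_swap {n : ℕ} (X : Pairs n → SignType) (i j : Fin n) :
    skewExtend X j i = -skewExtend X i j := by
  unfold skewExtend
  rcases lt_trichotomy i j with h | rfl | h
  · rw [dif_neg (asymm h), dif_pos h, dif_pos h]
  · simp
  · rw [dif_pos h, dif_neg (asymm h), dif_pos h, neg_neg]

theorem isRealizableBraidCovector_iff {n : ℕ} (X : Pairs n → SignType) :
    IsRealizableBraidCovector X ↔
      ∀ i j k : Fin n, ∀ hij : i < j, ∀ hjk : j < k,
        SignOrth ![X ⟨(i, j), hij⟩, X ⟨(j, k), hjk⟩, X ⟨(i, k), lt_trans hij hjk⟩]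
          ![1, 1, -1] := by
  simp only [signOrth_iff_signTransitive]
  constructor
  · rintro ⟨u, hu⟩ i j k hij hjk
    rw [hu, hu, hu]
    exact signTransitive_signCmp (u i) (u j) (u k)
  · intro h
    have ht := signTransitive_of_lt (skewExtend_swap X) fun i j k hij hjk => by
      rw [skewExtend_of_lt X hij, skewExtend_of_lt X hjk, skewExtend_of_lt X (hij.trans hjk)]
      exact h i j k hij hjk
    refine ⟨fun i => (rankBelow (skewExtend X) i : ℝ), fun e => ?_⟩
    rw [← skewExtend_of_lt X e.2, eq_signCmp_rankBelow (skewExtend_swap X) ht]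
    simp only [signCmp, Nat.cast_lt]

theorem sweepOM_iff_transitivity_general {n : ℕ} (C : Set (Pairs n → SignType)) :
    (∀ X ∈ C, IsRealizableBraidCovector X) ↔
    (∀ X ∈ C, ∀ i j k : Fin n, ∀ hij : i < j, ∀ hjk : j < k,
      SignOrth
        ![X ⟨(i, j), hij⟩, X ⟨(j, k), hjk⟩, X ⟨(i, k), lt_trans hij hjk⟩]
        ![1, 1, -1]) :=
  forall₂_congr fun X _ => isRealizableBraidCovector_iff X

/-- An oriented matroid `M` on `E_n` is a sweep oriented matroid (all covectors are
braid covectors) iff every covector satisfies the transitivity condition: for all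
`i < j < k` the triple `(X_{(i,j)}, X_{(j,k)}, X_{(i,k)})` is orthogonal to `(+,+,-)`. -/
theorem sweepOM_iff_transitivity {n : ℕ} (C : Set (Pairs n → SignType))
    (hC : IsOrientedMatroid C) :
    (∀ X ∈ C, IsRealizableBraidCovector X) ↔
    (∀ X ∈ C, ∀ i j k : Fin n, ∀ hij : i < j, ∀ hjk : j < k,
      SignOrth
        ![X ⟨(i, j), hij⟩, X ⟨(j, k), hjk⟩, X ⟨(i, k), lt_trans hij hjk⟩]
        ![1, 1, -1]) :=
  sweepOM_iff_transitivity_general C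
end

section
/- Let M be a sweep oriented matroid on E_n with little oriented matroid L. Then there is a weak map from the first Dilworth truncation of the underlying matroid of L to the underlying matroid of M; that is, for every subset G ⊆ E_n, the rank of G in the underlying matroid of M is at most the rank of G in the first Dilworth truncation of the underlying matroid of L. -/
/-!
The covectors of `M` define a closure operator (`e ∈ cl A` iff every covector vanishing on `A`
vanishes at `e`) which satisfies exchange by covector elimination, so it is the closure operator of
the underlying matroid of `M`. A chain of length `r` in `M|G` yields `r` elements of `G`, triangular
with respect to the covectors of the chain and hence independent. Sort them into the parts `F_k`.
The pairs within the endpoint set `S_k` of `F_k` are spanned by the star of any `s ∈ S_k`, because a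
braid covector vanishing on that star has `S_k` inside one block. A basis `g_0, …, g_{m-1}` of the
star gives covectors `Y_b = V_0 ∘ ⋯ ∘ V_{b-1}` whose blocks containing `s` shrink strictly, and
cutting their ordered partitions at the block of `s` gives `m + 2` nested covectors of `L|S_k`.
Hence each part contributes at most `rank_L(S_k) - 1` elements, and summing over the parts gives the
inequality.
-/

open Set

section OrientedMatroid

variable {E : Type*} {C : Set (E → SignType)} {X Y Z : E → SignType}

lemma covLE_refl (X : E → SignType) : covLE X X := fun _ ↦ .inr rfl

lemma covLE.trans (hXY : covLE X Y) (hYZ : covLE Y Z) : covLE X Z := fun e ↦ by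
  rcases hXY e with h | h
  · exact .inl h
  · exact (hYZ e).imp (h.trans) (h.trans)

lemma covLE.eq_zero (hXY : covLE X Y) {e : E} (he : Y e = 0) : X e = 0 :=
  (hXY e).elim id (·.trans he)

lemma covLE_signComp (X Y : E → SignType) : covLE X (signComp X Y) := fun e ↦ by
  by_cases h : X e = 0 <;> simp [signComp, h]

lemma signComp_eq_zero_iff {e : E} : signComp X Y e = 0 ↔ X e = 0 ∧ Y e = 0 := by
  by_cases h : X e = 0 <;> simp [signComp, h]

lemma covLE.exists_eq_zero_ne_zero (hXY : covLE X Y) (hne : X ≠ Y) :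
    ∃ e, X e = 0 ∧ Y e ≠ 0 := by
  by_contra! h
  exact hne (funext fun e ↦ (hXY e).elim (fun h0 ↦ h0.trans (h e h0).symm) id)

lemma HasChain.mono {P : Set (E → SignType)} {r r' : ℕ} (h : HasChain P r) (hle : r' ≤ r) :
    HasChain P r' := by
  obtain ⟨c, hc, hchain⟩ := h
  exact ⟨fun i ↦ c (Fin.castLE (by omega) i), fun i ↦ hc _, fun i j hij ↦ hchain _ _ hij⟩

lemma HasRank.le_of_hasChain {P : Set (E → SignType)} {r r' : ℕ} (h : HasRank P r)
    (h' : HasChain P r') : r' ≤ r :=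
  not_lt.mp fun hlt ↦ h.2 (h'.mono hlt)

lemma hasChain_of_forall_exists_eq_zero_ne_zero {P : Set (E → SignType)} {r : ℕ}
    (f : ℕ → E → SignType) (hP : ∀ i ≤ r, f i ∈ P)
    (hle : ∀ i j, i ≤ j → j ≤ r → covLE (f i) (f j))
    (hne : ∀ i j, i < j → j ≤ r → ∃ x, f i x = 0 ∧ f j x ≠ 0) : HasChain P r := by
  refine ⟨fun i ↦ f i, fun i ↦ hP i (by omega), fun i j hij ↦
    ⟨hle i j hij.le (by omega), fun h ↦ ?_⟩⟩
  obtain ⟨x, hx0, hx⟩ := hne i j hij (by omega)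
  have hij' : f i x = f j x := congrFun h x
  exact hx (hij' ▸ hx0)

variable (C) in
def zeroClosure (A : Set E) : Set E :=
  {e | ∀ Y ∈ C, (∀ a ∈ A, Y a = 0) → Y e = 0}

lemma subset_zeroClosure (A : Set E) : A ⊆ zeroClosure C A :=
  fun _ ha _ _ hY ↦ hY _ ha

lemma zeroClosure_subset_zeroClosure {A B : Set E} (h : A ⊆ zeroClosure C B) :
    zeroClosure C A ⊆ zeroClosure C B :=
  fun _ he Y hY hYB ↦ he Y hY fun _ ha ↦ h ha Y hY hYB

lemma zeroClosure_mono {A B : Set E} (h : A ⊆ B) : zeroClosure C A ⊆ zeroClosure C B :=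
  zeroClosure_subset_zeroClosure (h.trans (subset_zeroClosure B))

/-- Exchange, by eliminating `b` between a covector separating `a` from `A` and a covector
vanishing on `insert a A` but not at `b`. -/
lemma IsOrientedMatroid.mem_zeroClosure_insert_of_mem_zeroClosure_insert
    (hOM : IsOrientedMatroid C) {A : Set E} {a b : E} (ha : a ∉ zeroClosure C A)
    (hab : a ∈ zeroClosure C (insert b A)) : b ∈ zeroClosure C (insert a A) := by
  simp only [zeroClosure, mem_ofPred_eq, not_forall] at ha
  obtain ⟨V, hV, hVA, hVa⟩ := ha
  intro W hW hWaA
  by_contra hWb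
  have hVb : V b ≠ 0 := fun hVb ↦ hVa <| hab V hV <| by
    rintro x (rfl | hx)
    exacts [hVb, hVA x hx]
  obtain ⟨V', hV', hV'A, hV'a, hV'b⟩ :
      ∃ V' ∈ C, (∀ x ∈ A, V' x = 0) ∧ V' a ≠ 0 ∧ V' b = -W b := by
    have : V b = -W b ∨ -V b = -W b := by
      revert hVb hWb; generalize V b = s; generalize W b = t; decide +revert
    rcases this with h | h
    · exact ⟨V, hV, hVA, hVa, h⟩
    · exact ⟨-V, hOM.2.1 V hV, fun x hx ↦ by simp [hVA x hx], by simpa using hVa, h⟩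
  obtain ⟨Z, hZ, hZb, hZ_eq⟩ := hOM.2.2.2 V' hV' W hW b (by simpa [hV'b] using hWb) hV'b
  have hWa : W a = 0 := hWaA a (mem_insert a A)
  have hZa : Z a = V' a := by
    rw [hZ_eq a (by simp [hWa, hV'a]), signComp, if_neg hV'a]
  refine hV'a (hZa ▸ hab Z hZ ?_)
  rintro x (rfl | hx)
  · exact hZb
  · rw [hZ_eq x (by simp [hV'A x hx]), signComp, if_pos (hV'A x hx)]
    exact hWaA x (mem_insert_of_mem a hx)

variable (C) in
def ZeroIndep (I : Set E) : Prop := ∀ x ∈ I, x ∉ zeroClosure C (I \ {x})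

lemma ZeroIndep.subset {I J : Set E} (hJ : ZeroIndep C J) (hIJ : I ⊆ J) : ZeroIndep C I :=
  fun x hx hcl ↦ hJ x (hIJ hx) (zeroClosure_mono (sdiff_subset_sdiff_left hIJ) hcl)

lemma IsOrientedMatroid.zeroIndep_insert_iff (hOM : IsOrientedMatroid C) {I : Set E} {x : E}
    (hI : ZeroIndep C I) (hx : x ∉ I) :
    ZeroIndep C (insert x I) ↔ x ∉ zeroClosure C I := by
  refine ⟨fun h ↦ by simpa [hx] using h x (mem_insert x I), fun hxI y hy hcl ↦ ?_⟩
  obtain rfl | hyI := hy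
  · exact hxI (by simpa [hx] using hcl)
  have hyx : y ≠ x := by rintro rfl; exact hx hyI
  rw [insert_sdiff_of_notMem _ (mem_singleton_iff.not.mpr hyx.symm)] at hcl
  refine hxI ?_
  simpa [insert_sdiff_singleton, insert_eq_of_mem hyI] using
    hOM.mem_zeroClosure_insert_of_mem_zeroClosure_insert (hI y hyI) hcl

/-- If every element of `B \ I` lay in the closure of `I`, so would `B` and hence, by the
maximality of `B`, every element; this contradicts the non-maximality of `I`. -/
lemma IsOrientedMatroid.exists_insert_zeroIndep (hOM : IsOrientedMatroid C) {I B : Set E}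
    (hI : ZeroIndep C I) (hImax : ¬ Maximal (ZeroIndep C) I) (hB : Maximal (ZeroIndep C) B) :
    ∃ x ∈ B \ I, ZeroIndep C (insert x I) := by
  obtain ⟨J, hJ, hIJ, hJI⟩ : ∃ J, ZeroIndep C J ∧ I ⊆ J ∧ ¬ J ⊆ I := by
    simpa [Maximal, hI] using hImax
  obtain ⟨y, hyJ, hyI⟩ := not_subset.mp hJI
  have hyI' : y ∉ zeroClosure C I :=
    (hOM.zeroIndep_insert_iff hI hyI).mp (hJ.subset (insert_subset hyJ hIJ))
  by_contra! hnone
  have hBI : B ⊆ zeroClosure C I := fun x hxB ↦ by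
    by_cases hxI : x ∈ I
    · exact subset_zeroClosure I hxI
    · by_contra hx
      exact hnone x ⟨hxB, hxI⟩ ((hOM.zeroIndep_insert_iff hI hxI).mpr hx)
  by_cases hyB : y ∈ B
  · exact hyI' (hBI hyB)
  refine hyI' (zeroClosure_subset_zeroClosure hBI ?_)
  by_contra hyB'
  exact hyB (hB.2 ((hOM.zeroIndep_insert_iff hB.1 hyB).mpr hyB') (subset_insert y B)
    (mem_insert y B))

def IsOrientedMatroid.matroid [Finite E] (hOM : IsOrientedMatroid C) : Matroid E :=
  (IndepMatroid.ofBdd univ (ZeroIndep C) (fun _ h ↦ (notMem_empty _ h).elim)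
    (fun _ _ hJ hIJ ↦ hJ.subset hIJ) (fun _ _ ↦ hOM.exists_insert_zeroIndep)
    (fun _ _ ↦ subset_univ _) ⟨Nat.card E, fun I _ ↦ by
      simpa [ENat.card_eq_coe_natCard] using encard_le_encard (subset_univ I)⟩).matroid

@[simp] lemma IsOrientedMatroid.matroid_indep_iff [Finite E] (hOM : IsOrientedMatroid C)
    {I : Set E} : hOM.matroid.Indep I ↔ ZeroIndep C I := Iff.rfl

@[simp] lemma IsOrientedMatroid.matroid_ground [Finite E] (hOM : IsOrientedMatroid C) :
    hOM.matroid.E = univ := rfl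

lemma IsOrientedMatroid.matroid_closure_eq [Finite E] (hOM : IsOrientedMatroid C) (X : Set E) :
    hOM.matroid.closure X = zeroClosure C X := by
  have hindep : ∀ I, hOM.matroid.Indep I → hOM.matroid.closure I = zeroClosure C I := by
    intro I hI
    ext x
    by_cases hxI : x ∈ I
    · simp [hOM.matroid.subset_closure I (by simp) hxI, subset_zeroClosure I hxI]
    rw [← not_iff_not, hI.notMem_closure_iff_of_notMem hxI (by simp), matroid_indep_iff,
      hOM.zeroIndep_insert_iff hI hxI]
  obtain ⟨I, hI⟩ := hOM.matroid.exists_isBasis X (by simp)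
  rw [← hI.closure_eq_closure, hindep I hI.indep]
  refine (zeroClosure_mono hI.subset).antisymm (zeroClosure_subset_zeroClosure ?_)
  rw [← hindep I hI.indep, hI.closure_eq_closure]
  exact hOM.matroid.subset_closure X (by simp)

lemma IsOrientedMatroid.indep_range_of_triangular [Finite E] (hOM : IsOrientedMatroid C)
    {ι : Type*} [LinearOrder ι] [Finite ι] (e : ι → E) (Z : ι → E → SignType)
    (hZ : ∀ t, Z t ∈ C) (hlt : ∀ t t', t < t' → Z t (e t') = 0)
    (hne : ∀ t, Z t (e t) ≠ 0) :
    Function.Injective e ∧ hOM.matroid.Indep (range e) := by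
  refine ⟨fun t t' h ↦ ?_, ?_⟩
  · rcases lt_trichotomy t t' with htt' | rfl | htt'
    · exact (hne t (h ▸ hlt t t' htt')).elim
    · rfl
    · exact (hne t' (h ▸ hlt t' t htt')).elim
  -- A circuit inside the family would put its member of least index in the closure of the
  -- members of larger index, on which `Z t` vanishes.
  by_contra hdep
  rw [Matroid.not_indep_iff (by simp)] at hdep
  obtain ⟨K, hKe, hK⟩ := hdep.exists_isCircuit_subset
  obtain ⟨t, ht⟩ := (toFinite {t | e t ∈ K}).exists_minimal <| by
    obtain ⟨x, hx⟩ := hK.nonempty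
    obtain ⟨t, rfl⟩ := hKe hx
    exact ⟨t, hx⟩
  have hsub : K \ {e t} ⊆ e '' {t' | t < t'} := by
    rintro x ⟨hxK, hxt⟩
    obtain ⟨t', rfl⟩ := hKe hxK
    refine ⟨t', lt_of_le_of_ne ?_ fun h ↦ hxt (h ▸ rfl), rfl⟩
    exact not_lt.mp fun h ↦ ht.not_lt (y := t') hxK h
  have hcl := hOM.matroid.closure_subset_closure hsub
    (hK.mem_closure_sdiff_singleton_of_mem ht.prop)
  rw [hOM.matroid_closure_eq] at hcl
  exact hne t (hcl (Z t) (hZ t) (by rintro _ ⟨t', ht', rfl⟩; exact hlt t t' ht'))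

lemma IsOrientedMatroid.exists_indep_of_hasChain [Finite E] (hOM : IsOrientedMatroid C)
    {G : Set E} {r : ℕ} (h : HasChain (restrictSet C G) r) :
    ∃ e : Fin r → E, (∀ t, e t ∈ G) ∧ Function.Injective e ∧
      hOM.matroid.Indep (range e) := by
  obtain ⟨c, hc, hchain⟩ := h
  choose X hXC hX using hc
  have hstep (t : Fin r) : ∃ x, c t.castSucc x = 0 ∧ c t.succ x ≠ 0 :=
    (hchain _ _ t.castSucc_lt_succ).1.exists_eq_zero_ne_zero (hchain _ _ t.castSucc_lt_succ).2
  choose x hx0 hx1 using hstep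
  refine ⟨fun t ↦ x t, fun t ↦ (x t).2,
    hOM.indep_range_of_triangular _ (fun t ↦ X t.succ) (fun t ↦ hXC _) (fun t t' htt' ↦ ?_)
    fun t ↦ hX t.succ (x t) ▸ hx1 t⟩
  rw [← hX]
  rcases (Fin.succ_le_castSucc_iff.mpr htt').lt_or_eq with hlt | heq
  · exact (hchain _ _ hlt).1.eq_zero (hx0 t')
  · exact heq ▸ hx0 t'

/-- `compPrefix V b = V 0 ∘ V 1 ∘ ⋯ ∘ V (min b m - 1)`. -/
def compPrefix {m : ℕ} (V : Fin m → E → SignType) : ℕ → E → SignType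
  | 0 => fun _ ↦ 0
  | b + 1 => if h : b < m then signComp (compPrefix V b) (V ⟨b, h⟩) else compPrefix V b

lemma compPrefix_eq_zero_iff {m : ℕ} (V : Fin m → E → SignType) (b : ℕ) (e : E) :
    compPrefix V b e = 0 ↔ ∀ j : Fin m, (j : ℕ) < b → V j e = 0 := by
  induction b with
  | zero => simp [compPrefix]
  | succ b ih =>
    by_cases hb : b < m
    · simp only [compPrefix, hb, dite_true, signComp_eq_zero_iff, ih]
      refine ⟨fun ⟨h, hb'⟩ j hj ↦ ?_,
        fun h ↦ ⟨fun j hj ↦ h j (by omega), h _ (by simp)⟩⟩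
      rcases (Nat.lt_succ_iff.mp hj).lt_or_eq with hj | hj
      · exact h j hj
      · obtain rfl : j = ⟨b, hb⟩ := Fin.ext hj
        exact hb'
    · simp only [compPrefix, hb, dite_false, ih]
      exact forall_congr' fun j ↦ imp_congr_left (by have := j.isLt; omega)

lemma IsOrientedMatroid.compPrefix_mem (hOM : IsOrientedMatroid C) {m : ℕ}
    {V : Fin m → E → SignType} (hV : ∀ j, V j ∈ C) (b : ℕ) : compPrefix V b ∈ C := by
  induction b with
  | zero => exact hOM.1
  | succ b ih =>
    by_cases hb : b < m
    · simpa [compPrefix, hb] using hOM.2.2.1 _ ih _ (hV _)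
    · simpa [compPrefix, hb] using ih

lemma covLE_compPrefix {m : ℕ} (V : Fin m → E → SignType) {a b : ℕ} (hab : a ≤ b) :
    covLE (compPrefix V a) (compPrefix V b) := by
  induction b, hab using Nat.le_induction with
  | base => exact covLE_refl _
  | succ b _ ih =>
    refine ih.trans ?_
    by_cases hb : b < m
    · simpa [compPrefix, hb] using covLE_signComp _ _
    · simpa [compPrefix, hb] using covLE_refl _

/-- `Y b` composes covectors `V c` (for `c < b`) vanishing on all of `g` except `g c`. -/
lemma IsOrientedMatroid.exists_chain_of_indep [Finite E] (hOM : IsOrientedMatroid C) {m : ℕ}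
    {g : Fin m → E} (hg : Function.Injective g) (hI : hOM.matroid.Indep (range g)) :
    ∃ Y : ℕ → E → SignType, (∀ b, Y b ∈ C) ∧
      (∀ a b, a ≤ b → covLE (Y a) (Y b)) ∧
      ∀ c : Fin m, ∀ b, Y b (g c) = 0 ↔ b ≤ c := by
  have hsep (c : Fin m) : ∃ V ∈ C, (∀ x ∈ range g \ {g c}, V x = 0) ∧ V (g c) ≠ 0 := by
    simpa [zeroClosure] using hI (g c) (mem_range_self c)
  choose V hVC hV0 hV using hsep
  refine ⟨compPrefix V, hOM.compPrefix_mem hVC, fun _ _ ↦ covLE_compPrefix V,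
    fun c b ↦ ?_⟩
  rw [compPrefix_eq_zero_iff]
  refine ⟨fun h ↦ not_lt.mp fun hcb ↦ hV c (h c hcb),
    fun hbc j hjb ↦ hV0 j _ ⟨⟨c, rfl⟩, ?_⟩⟩
  exact fun h ↦ (Fin.ne_of_lt (Fin.lt_def.mpr (by omega)) (hg h).symm)

end OrientedMatroid

section Sweep

variable {n : ℕ} {C : Set (Pairs n → SignType)}
  {β γ : Type*} [LinearOrder β] [LinearOrder γ]

/-- The braid covector of the ordered partition of `[n]` whose blocks are the fibres of `p`. -/
def braidVector (p : Fin n → β) (e : Pairs n) : SignType :=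
  if p e.1.1 < p e.1.2 then 1 else if p e.1.2 < p e.1.1 then -1 else 0

lemma braidVector_eq_zero_iff {p : Fin n → β} {e : Pairs n} :
    braidVector p e = 0 ↔ p e.1.1 = p e.1.2 := by
  unfold braidVector
  rcases lt_trichotomy (p e.1.1) (p e.1.2) with h | h | h
  · simp [h, h.ne]
  · simp [h]
  · simp [h, h.not_gt, h.ne']

lemma braidVector_eq_one_iff {p : Fin n → β} {e : Pairs n} :
    braidVector p e = 1 ↔ p e.1.1 < p e.1.2 := by
  unfold braidVector
  rcases lt_trichotomy (p e.1.1) (p e.1.2) with h | h | h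
  · simp [h]
  · simp [h]
  · simp [h, h.not_gt]

lemma braidVector_eq_neg_one_iff {p : Fin n → β} {e : Pairs n} :
    braidVector p e = -1 ↔ p e.1.2 < p e.1.1 := by
  unfold braidVector
  rcases lt_trichotomy (p e.1.1) (p e.1.2) with h | h | h
  · simp [h, h.not_gt]
  · simp [h]
  · simp [h, h.not_gt]

lemma lt_of_covLE_braidVector {p : Fin n → β} {q : Fin n → γ}
    (h : covLE (braidVector p) (braidVector q)) {a b : Fin n} (hab : p a < p b) : q a < q b := by
  rcases lt_or_gt_of_ne (show a ≠ b by rintro rfl; exact hab.false) with hlt | hlt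
  · have := (h ⟨(a, b), hlt⟩).resolve_left (by simp [braidVector_eq_zero_iff, hab.ne])
    exact braidVector_eq_one_iff.mp (this ▸ braidVector_eq_one_iff.mpr hab)
  · have := (h ⟨(b, a), hlt⟩).resolve_left (by simp [braidVector_eq_zero_iff, hab.ne'])
    exact braidVector_eq_neg_one_iff.mp (this ▸ braidVector_eq_neg_one_iff.mpr hab)

/-- The little covector cutting the ordered partition `p` at the block of `s`. -/
def cutVector (p : Fin n → β) (s i : Fin n) : SignType :=
  if p i < p s then -1 else if p s < p i then 1 else 0

/-- The little tope cutting the ordered partition `p` just before the block of `s`. -/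
def topeVector (p : Fin n → β) (s i : Fin n) : SignType :=
  if p i < p s then -1 else 1

lemma cutVector_eq_zero_iff {p : Fin n → β} {s i : Fin n} :
    cutVector p s i = 0 ↔ p i = p s := by
  unfold cutVector
  rcases lt_trichotomy (p i) (p s) with h | h | h
  · simp [h, h.ne]
  · simp [h]
  · simp [h, h.not_gt, h.ne']

lemma covLE_cutVector {p : Fin n → β} {q : Fin n → γ} (h : ∀ a b, p a < p b → q a < q b)
    (s : Fin n) : covLE (cutVector p s) (cutVector q s) := fun i ↦ by
  unfold cutVector
  rcases lt_trichotomy (p i) (p s) with hi | hi | hi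
  · simp [hi, h _ _ hi]
  · simp [hi]
  · simp [hi, h _ _ hi, hi.not_gt, (h _ _ hi).not_gt]

lemma covLE_cutVector_topeVector {p : Fin n → β} {q : Fin n → γ}
    (h : ∀ a b, p a < p b → q a < q b) (s : Fin n) :
    covLE (cutVector p s) (topeVector q s) := fun i ↦ by
  unfold cutVector topeVector
  rcases lt_trichotomy (p i) (p s) with hi | hi | hi
  · simp [hi, h _ _ hi]
  · simp [hi]
  · simp [hi, hi.not_gt, (h _ _ hi).not_gt]

variable {X : Pairs n → SignType} {l : ℕ} {p : Fin n → Fin l}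

/-- `cutVector p s` is the covector `X^k` with `k = 2 (p s + 1)` of the big oriented matroid. -/
lemma cutVector_mem_littleCovectors (hX : X ∈ C) (hp : Function.Surjective p)
    (hXp : ∀ e, X e = braidVector p e) (s : Fin n) : cutVector p s ∈ LittleCovectors C := by
  refine ⟨Sum.elim (cutVector p s) X, ⟨X, hX, l, p, hp, hXp, 2 * ((p s : ℕ) + 1), by omega,
    by omega, fun i ↦ ?_, fun _ ↦ rfl⟩, fun _ ↦ rfl⟩
  simp only [Sum.elim_inl, cutVector, Fin.lt_def]
  split_ifs <;> first | rfl | omega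

/-- `topeVector p s` is the covector `X^k` with `k = 2 p s + 1` of the big oriented matroid. -/
lemma topeVector_mem_littleCovectors (hX : X ∈ C) (hp : Function.Surjective p)
    (hXp : ∀ e, X e = braidVector p e) (s : Fin n) : topeVector p s ∈ LittleCovectors C := by
  refine ⟨Sum.elim (topeVector p s) X, ⟨X, hX, l, p, hp, hXp, 2 * (p s : ℕ) + 1, by omega,
    by omega, fun i ↦ ?_, fun _ ↦ rfl⟩, fun _ ↦ rfl⟩
  simp only [Sum.elim_inl, topeVector, Fin.lt_def]
  split_ifs <;> first | rfl | omega

def star (s : Fin n) (S : Set (Fin n)) : Set (Pairs n) :=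
  {e | (e.1.1 = s ∧ e.1.2 ∈ S) ∨ (e.1.2 = s ∧ e.1.1 ∈ S)}

def pairsWithin (S : Set (Fin n)) : Set (Pairs n) := {e | e.1.1 ∈ S ∧ e.1.2 ∈ S}

lemma exists_braidVector_eq_zero_iff_cutVector_of_mem_star {s : Fin n} {S : Set (Fin n)}
    {e : Pairs n} (he : e ∈ star s S) :
    ∃ u ∈ S, ∀ {l : ℕ} (p : Fin n → Fin l),
      braidVector p e = 0 ↔ cutVector p s u = 0 := by
  simp only [braidVector_eq_zero_iff, cutVector_eq_zero_iff]
  rcases he with ⟨hs, hu⟩ | ⟨hs, hu⟩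
  · exact ⟨_, hu, fun p ↦ by rw [hs, eq_comm]⟩
  · exact ⟨_, hu, fun p ↦ by rw [hs]⟩

lemma pairsWithin_subset_zeroClosure_star (hsweep : ∀ X ∈ C, IsBraidCovector X)
    (s : Fin n) (S : Set (Fin n)) : pairsWithin S ⊆ zeroClosure C (star s S) := by
  rintro e ⟨he1, he2⟩ Y hY hYstar
  obtain ⟨l, p, -, hYp⟩ := hsweep Y hY
  obtain rfl : Y = braidVector p := funext hYp
  have hblock : ∀ i ∈ S, p i = p s := fun i hi ↦ by
    rcases lt_trichotomy i s with h | rfl | h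
    · exact braidVector_eq_zero_iff.mp (hYstar ⟨(i, s), h⟩ (.inr ⟨rfl, hi⟩))
    · rfl
    · exact (braidVector_eq_zero_iff.mp (hYstar ⟨(s, i), h⟩ (.inl ⟨rfl, hi⟩))).symm
  rw [braidVector_eq_zero_iff, hblock _ he1, hblock _ he2]

/-- The little chain is `cut₀ < ⋯ < cutₘ < tope`, where `cut_b` cuts the ordered partition of
`Y b` at the block of `s`. -/
lemma hasChain_littleCovectors (hsweep : ∀ X ∈ C, IsBraidCovector X) {S : Set (Fin n)}
    {s : Fin n} (hs : s ∈ S) {m : ℕ} {g : Fin m → Pairs n} (hg : ∀ c, g c ∈ star s S)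
    {Y : ℕ → Pairs n → SignType} (hYC : ∀ b, Y b ∈ C)
    (hY : ∀ a b, a ≤ b → covLE (Y a) (Y b)) (hYg : ∀ c b, Y b (g c) = 0 ↔ b ≤ c) :
    HasChain (restrictSet (LittleCovectors C) S) (m + 1) := by
  choose l p hp hYp using fun b ↦ hsweep (Y b) (hYC b)
  have hYp' (b : ℕ) : Y b = braidVector (p b) := funext (hYp b)
  have hrefine (a b : ℕ) (hab : a ≤ b) (i j : Fin n) : p a i < p a j → p b i < p b j :=
    lt_of_covLE_braidVector (hYp' a ▸ hYp' b ▸ hY a b hab)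
  choose u hu hug using fun c ↦ exists_braidVector_eq_zero_iff_cutVector_of_mem_star (hg c)
  have hcut (b : ℕ) (c : Fin m) : cutVector (p b) s (u c) = 0 ↔ b ≤ c := by
    rw [← hug, ← hYg c b, hYp']
  refine hasChain_of_forall_exists_eq_zero_ne_zero
    (fun b (i : S) ↦ if b ≤ m then cutVector (p b) s i else topeVector (p m) s i)
    (fun b _ ↦ ?_) (fun a b hab hb ↦ ?_) (fun a b hab hb ↦ ?_)
  · split_ifs
    · exact ⟨_, cutVector_mem_littleCovectors (hYC b) (hp b) (hYp b) s, fun _ ↦ rfl⟩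
    · exact ⟨_, topeVector_mem_littleCovectors (hYC m) (hp m) (hYp m) s, fun _ ↦ rfl⟩
  · by_cases hbm : b ≤ m
    · simp only [hbm, hab.trans hbm, if_true]
      exact fun i ↦ covLE_cutVector (hrefine a b hab) s i
    by_cases ham : a ≤ m
    · simp only [hbm, ham, if_true, if_false]
      exact fun i ↦ covLE_cutVector_topeVector (hrefine a m ham) s i
    · simpa [hbm, ham] using covLE_refl _
  · by_cases hbm : b ≤ m
    · refine ⟨⟨u ⟨b - 1, by omega⟩, hu _⟩, ?_⟩
      simp only [hbm, hab.le.trans hbm, if_true, ne_eq, hcut]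
      omega
    · refine ⟨⟨s, hs⟩, ?_⟩
      simp [hbm, show a ≤ m by omega, cutVector_eq_zero_iff, topeVector]

/-- The star of `s` spans the pairs within `S`, and a basis of the star yields a chain in the
little oriented matroid. -/
lemma IsOrientedMatroid.eRk_pairsWithin_add_one_le (hOM : IsOrientedMatroid C)
    (hsweep : ∀ X ∈ C, IsBraidCovector X) {S : Set (Fin n)} {s : Fin n} (hs : s ∈ S) {r : ℕ}
    (hr : HasRank (restrictSet (LittleCovectors C) S) r) :
    hOM.matroid.eRk (pairsWithin S) + 1 ≤ r := by
  obtain ⟨B, hB⟩ := hOM.matroid.exists_isBasis (star s S) (by simp)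
  obtain ⟨g, hg, hrange⟩ :
      ∃ g : Fin (Nat.card B) → Pairs n, Function.Injective g ∧ range g = B :=
    ⟨_, Subtype.val_injective.comp (Finite.equivFin B).symm.injective, by
      rw [range_comp, Equiv.range_eq_univ, image_univ, Subtype.range_coe]⟩
  obtain ⟨Y, hYC, hY, hYg⟩ := hOM.exists_chain_of_indep hg (by rw [hrange]; exact hB.indep)
  have hchain := hasChain_littleCovectors hsweep hs
    (fun c ↦ hB.subset (hrange ▸ mem_range_self c)) hYC hY hYg
  calc hOM.matroid.eRk (pairsWithin S) + 1
      ≤ hOM.matroid.eRk (star s S) + 1 := by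
        gcongr
        rw [← hOM.matroid.eRk_closure_eq (star s S), hOM.matroid_closure_eq]
        exact hOM.matroid.eRk_mono (pairsWithin_subset_zeroClosure_star hsweep s S)
    _ = Nat.card B + 1 := by
        rw [← hB.encard_eq_eRk, Nat.card_coe_set_eq, (toFinite B).cast_ncard_eq]
    _ ≤ r := by exact_mod_cast hr.le_of_hasChain hchain

end Sweep

theorem weakMap_dilworth_general {n : ℕ} (C : Set (Pairs n → SignType))
    (hOM : IsOrientedMatroid C) (hsweep : ∀ X ∈ C, IsBraidCovector X)
    (G : Set (Pairs n)) (rG : ℕ) (hrG : HasRank (restrictSet C G) rG)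
    (l : ℕ) (F : Fin l → Set (Pairs n))
    (hne : ∀ k, (F k).Nonempty)
    (hunion : (⋃ k, F k) = G)
    (rL : Fin l → ℕ)
    (hrL : ∀ k, HasRank (restrictSet (LittleCovectors C)
        {i : Fin n | ∃ e ∈ F k, e.1.1 = i ∨ e.1.2 = i}) (rL k)) :
    (rG : ℤ) ≤ (∑ k, (rL k : ℤ)) - l := by
  obtain ⟨e, heG, he, hindep⟩ := hOM.exists_indep_of_hasChain hrG.1
  choose part hpart using fun t ↦ mem_iUnion.mp (hunion ▸ heG t)
  have hbound (k : Fin l) : (Finset.univ.filter fun t ↦ part t = k).card + 1 ≤ rL k := by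
    obtain ⟨x, hx⟩ := hne k
    have hsub : e '' ↑(Finset.univ.filter fun t ↦ part t = k) ⊆
        pairsWithin {i : Fin n | ∃ e ∈ F k, e.1.1 = i ∨ e.1.2 = i} := by
      rintro _ ⟨t, ht, rfl⟩
      replace ht : part t = k := by simpa using ht
      exact ⟨⟨_, ht ▸ hpart t, .inl rfl⟩, ⟨_, ht ▸ hpart t, .inr rfl⟩⟩
    have hrk := (hindep.subset (image_subset_range _ _)).encard_le_eRk_of_subset hsub
    rw [he.encard_image, encard_coe_eq_coe_finsetCard] at hrk
    exact_mod_cast (add_le_add_left hrk 1).trans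
      (hOM.eRk_pairsWithin_add_one_le hsweep (by exact ⟨x, hx, .inl rfl⟩) (hrL k))
  have hsum : rG = ∑ k, (Finset.univ.filter fun t ↦ part t = k).card := by
    simpa using Finset.card_eq_sum_card_fiberwise (s := .univ) fun t _ ↦ Finset.mem_univ (part t)
  have htotal : rG + l ≤ ∑ k, rL k := by
    simpa [Finset.sum_add_distrib, ← hsum] using
      Finset.sum_le_sum (s := .univ) fun k _ ↦ hbound k
  have : (rG : ℤ) + l ≤ ∑ k, (rL k : ℤ) := by exact_mod_cast htotal
  linarith

/-- Weak map from the first Dilworth truncation of the underlying matroid of the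
little oriented matroid `L` to the underlying matroid of the sweep oriented matroid
`M`: for every subset `G ⊆ E_n` and every partition of `G` into nonempty parts
`F_1, …, F_l`, the rank of `G` in `M` is at most `(Σ_k rank_L(endpoints of F_k)) - l`.
(Rank of a subset is the rank of the restriction; since the Dilworth rank of `G` is
the minimum over such partitions, this is exactly the weak-map inequality.) -/
theorem weakMap_dilworth {n : ℕ} (C : Set (Pairs n → SignType))
    (hOM : IsOrientedMatroid C) (hsweep : ∀ X ∈ C, IsBraidCovector X)
    (G : Set (Pairs n)) (rG : ℕ) (hrG : HasRank (restrictSet C G) rG)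
    (l : ℕ) (F : Fin l → Set (Pairs n))
    (hne : ∀ k, (F k).Nonempty)
    (hdisj : ∀ k k' : Fin l, k ≠ k' → Disjoint (F k) (F k'))
    (hunion : (⋃ k, F k) = G)
    (rL : Fin l → ℕ)
    (hrL : ∀ k, HasRank (restrictSet (LittleCovectors C)
        {i : Fin n | ∃ e ∈ F k, e.1.1 = i ∨ e.1.2 = i}) (rL k)) :
    (rG : ℤ) ≤ (∑ k, (rL k : ℤ)) - l :=
  weakMap_dilworth_general C hOM hsweep G rG hrG l F hne hunion rL hrL
end

section
/- Let Π ⊆ S_n form an allowable graph of permutations with move set T. Then the inversion sets of moves in T partition the pair set E_n, and they coincide with the parallelism classes of the set of sign vectors {X^σ : σ ∈ Π} ⊆ {+,-}^{E_n}, where X^σ_{(i,j)} = + if σ^{-1}(i) < σ^{-1}(j) and - otherwise. -/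
/-- The inversion set of a permutation (viewed as the word `σ(1), …, σ(n)`):
pairs `i < j` such that `i` appears after `j`. -/
def invSet {n : ℕ} (σ : Equiv.Perm (Fin n)) : Set (Pairs n) :=
  {e | σ.symm e.1.2 < σ.symm e.1.1}

/-- A permutation of positions that reverses a collection of pairwise disjoint
intervals (substrings) and fixes everything else. -/
def IsBlockReversal {n : ℕ} (ρ : Equiv.Perm (Fin n)) : Prop :=
  ∃ (k : ℕ) (a b : Fin k → Fin n),
    (∀ t, a t ≤ b t) ∧
    (∀ s t, s ≠ t → (b s : ℕ) < (a t : ℕ) ∨ (b t : ℕ) < (a s : ℕ)) ∧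
    (∀ p : Fin n,
      (∃ t, a t ≤ p ∧ p ≤ b t ∧ ((ρ p : ℕ) = (a t : ℕ) + (b t : ℕ) - (p : ℕ))) ∨
      ((∀ t, ¬(a t ≤ p ∧ p ≤ b t)) ∧ ρ p = p))

/-- A move from `σ` to `γ`: `γ` is obtained from the word of `σ` by reversing one or
more disjoint substrings. -/
def IsMove {n : ℕ} (σ γ : Equiv.Perm (Fin n)) : Prop :=
  σ ≠ γ ∧ ∃ ρ : Equiv.Perm (Fin n), IsBlockReversal ρ ∧ ∀ p, γ p = σ (ρ p)

/-- The set of inversions of a move from `σ` to `γ`: `inv(σ) Δ inv(γ)`. -/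
def moveInv {n : ℕ} (σ γ : Equiv.Perm (Fin n)) : Set (Pairs n) :=
  symmDiff (invSet σ) (invSet γ)

/-- An allowable sequence in `P` from `σ` to `σ'` with moves in `T` (here a move in
`T` is recorded by its inversion set): a sequence of permutations of `P` in which
consecutive permutations differ by a move whose inversion set is in `T`, and each
pair is reversed at most once (the inversion sets of the steps are pairwise disjoint). -/
def AllowSeq {n : ℕ} (P : Set (Equiv.Perm (Fin n))) (T : Set (Set (Pairs n)))
    (σ σ' : Equiv.Perm (Fin n)) : Prop :=
  ∃ (l : ℕ) (γ : Fin (l + 1) → Equiv.Perm (Fin n)),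
    γ 0 = σ ∧ γ (Fin.last l) = σ' ∧ (∀ k, γ k ∈ P) ∧
    (∀ k : Fin l, IsMove (γ k.castSucc) (γ k.succ) ∧
      moveInv (γ k.castSucc) (γ k.succ) ∈ T) ∧
    (∀ k k' : Fin l, k ≠ k' →
      Disjoint (moveInv (γ k.castSucc) (γ k.succ)) (moveInv (γ k'.castSucc) (γ k'.succ)))

/-- The order-reversing permutation of positions. -/
def revFin (n : ℕ) : Equiv.Perm (Fin n) :=
  Function.Involutive.toPerm Fin.rev fun x => Fin.rev_rev x

/-- The reverse of a permutation: its word read backwards. -/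
def reversePerm {n : ℕ} (σ : Equiv.Perm (Fin n)) : Equiv.Perm (Fin n) :=
  σ * revFin n

/-- `P ⊆ S_n` together with a set of moves `T` forms an allowable graph of
permutations: (P1) `P` is symmetric (closed under reversal), (P2) any two
permutations of `P` are joined by an allowable sequence with moves in `T`,
(P3) the inversion sets of moves in `T` are pairwise equal or disjoint. -/
def IsAllowableGraph {n : ℕ} (P : Set (Equiv.Perm (Fin n)))
    (T : Set (Set (Pairs n))) : Prop :=
  (∀ σ ∈ P, reversePerm σ ∈ P) ∧
  (∀ σ ∈ P, ∀ σ' ∈ P, AllowSeq P T σ σ') ∧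
  (∀ D ∈ T, ∀ D' ∈ T, D = D' ∨ Disjoint D D')

/-- The sign vector `X^σ ∈ {+,-}^{E_n}` of a permutation:
`X^σ_{(i,j)} = +` iff `i` appears before `j` in the word of `σ`. -/
def permSign {n : ℕ} (σ : Equiv.Perm (Fin n)) : Pairs n → SignType := fun e =>
  if σ.symm e.1.1 < σ.symm e.1.2 then 1 else -1

/-- Two ground-set elements are parallel for the sign vectors of the permutations in
`P` : all sign vectors agree on them, or all disagree. -/
def ParallelIn {n : ℕ} (P : Set (Equiv.Perm (Fin n))) (e f : Pairs n) : Prop :=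
  (∀ σ ∈ P, permSign σ e = permSign σ f) ∨ (∀ σ ∈ P, permSign σ e = -permSign σ f)

/-!
Along an allowable sequence from `σ` to `σ'` each pair is reversed at most once, so
`inv σ ∆ inv σ'` is the disjoint union of the inversion sets of the moves taken. Since moves of
`T` are equal or disjoint, a move `D ∈ T` is either taken or avoided as a whole: all pairs of `D`
flip together between any two permutations of `P`, i.e. they are parallel. Conversely `D` is
realized by two permutations of `P`, which separate the pairs of `D` from all others. Every pair
lies in some move, because going from a permutation to its reverse flips every pair.
-/

open scoped symmDiff

theorem Set.symmDiff_eq_iUnion_of_pairwise_disjoint {α : Type*} {l : ℕ}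
    (A : Fin (l + 1) → Set α)
    (h : Pairwise fun k k' : Fin l ↦
      Disjoint (A k.castSucc ∆ A k.succ) (A k'.castSucc ∆ A k'.succ)) :
    A 0 ∆ A (Fin.last l) = ⋃ k : Fin l, A k.castSucc ∆ A k.succ := by
  induction l with
  | zero => simp
  | succ l ih =>
    have hinit := ih (A ∘ Fin.castSucc) fun k k' hkk' ↦ h (Fin.castSucc_injective _ |>.ne hkk')
    simp only [Function.comp_apply, Fin.castSucc_zero, ← Fin.succ_castSucc] at hinit
    have hlast : Disjoint (A 0 ∆ A (Fin.last l).castSucc)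
        (A (Fin.last l).castSucc ∆ A (Fin.last (l + 1))) := by
      rw [hinit, Set.disjoint_iUnion_left]
      exact fun k ↦ by simpa using h (Fin.castSucc_lt_last k).ne
    calc A 0 ∆ A (Fin.last (l + 1))
        = A 0 ∆ A (Fin.last l).castSucc ∆ (A (Fin.last l).castSucc ∆ A (Fin.last (l + 1))) := by
          simp [symmDiff_assoc]
      _ = _ := by
          rw [hlast.symmDiff_eq_sup, Set.iUnion_fin_add_one_eq_iUnion_castSucc, hinit]
          simp [Function.comp_def]

section

variable {n : ℕ}

theorem lt_iff_notMem_invSet (σ : Equiv.Perm (Fin n)) (e : Pairs n) :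
    σ.symm e.1.1 < σ.symm e.1.2 ↔ e ∉ invSet σ := by
  rw [invSet, Set.mem_ofPred_eq, not_lt]
  exact ⟨le_of_lt, fun h ↦ h.lt_of_ne (σ.symm.injective.ne e.2.ne)⟩

theorem permSign_of_mem {σ : Equiv.Perm (Fin n)} {e : Pairs n} (he : e ∈ invSet σ) :
    permSign σ e = -1 :=
  if_neg fun h ↦ (lt_iff_notMem_invSet σ e).1 h he

theorem permSign_of_notMem {σ : Equiv.Perm (Fin n)} {e : Pairs n} (he : e ∉ invSet σ) :
    permSign σ e = 1 :=
  if_pos ((lt_iff_notMem_invSet σ e).2 he)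

theorem permSign_eq_permSign_iff {σ : Equiv.Perm (Fin n)} {e f : Pairs n} :
    permSign σ e = permSign σ f ↔ (e ∈ invSet σ ↔ f ∈ invSet σ) := by
  by_cases he : e ∈ invSet σ <;> by_cases hf : f ∈ invSet σ <;>
    simp [permSign_of_mem, permSign_of_notMem, he, hf]

theorem permSign_eq_neg_permSign_iff {σ : Equiv.Perm (Fin n)} {e f : Pairs n} :
    permSign σ e = -permSign σ f ↔ ¬(e ∈ invSet σ ↔ f ∈ invSet σ) := by
  by_cases he : e ∈ invSet σ <;> by_cases hf : f ∈ invSet σ <;>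
    simp [permSign_of_mem, permSign_of_notMem, he, hf]

theorem moveInv_reversePerm (σ : Equiv.Perm (Fin n)) : moveInv σ (reversePerm σ) = Set.univ := by
  ext e
  have hrev : (reversePerm σ).symm = Fin.rev ∘ σ.symm := rfl
  have hrevInv : e ∈ invSet (reversePerm σ) ↔ e ∉ invSet σ := by
    rw [← lt_iff_notMem_invSet, invSet, Set.mem_ofPred_eq, hrev]
    exact Fin.rev_lt_rev
  simp only [moveInv, Set.mem_symmDiff, hrevInv, Set.mem_univ, iff_true]
  tauto

theorem parallelIn_iff {P : Set (Equiv.Perm (Fin n))} {e f : Pairs n} :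
    ParallelIn P e f ↔ ∀ σ ∈ P, ∀ σ' ∈ P, (e ∈ moveInv σ σ' ↔ f ∈ moveInv σ σ') := by
  simp only [ParallelIn, permSign_eq_permSign_iff, permSign_eq_neg_permSign_iff, moveInv,
    Set.mem_symmDiff]
  constructor
  · rintro (h | h) σ hσ σ' hσ' <;>
    · have := h σ hσ
      have := h σ' hσ'
      tauto
  · intro h
    rcases P.eq_empty_or_nonempty with rfl | ⟨σ₀, hσ₀⟩
    · exact .inl fun σ hσ ↦ absurd hσ (Set.notMem_empty σ)
    by_cases h₀ : e ∈ invSet σ₀ ↔ f ∈ invSet σ₀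
    · exact .inl fun σ hσ ↦ by have := h σ₀ hσ₀ σ hσ; tauto
    · exact .inr fun σ hσ ↦ by have := h σ₀ hσ₀ σ hσ; tauto

theorem AllowSeq.exists_moveInv_eq_sUnion {P : Set (Equiv.Perm (Fin n))}
    {T : Set (Set (Pairs n))} {σ σ' : Equiv.Perm (Fin n)} (hs : AllowSeq P T σ σ') :
    ∃ S ⊆ {D ∈ T | ∃ τ ∈ P, ∃ τ' ∈ P, moveInv τ τ' = D}, moveInv σ σ' = ⋃₀ S := by
  obtain ⟨l, γ, rfl, rfl, hP, hT, hdisj⟩ := hs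
  refine ⟨Set.range fun k : Fin l ↦ moveInv (γ k.castSucc) (γ k.succ), ?_, ?_⟩
  · rintro _ ⟨k, rfl⟩
    exact ⟨(hT k).2, _, hP _, _, hP _, rfl⟩
  · rw [Set.sUnion_range]
    exact Set.symmDiff_eq_iUnion_of_pairwise_disjoint (invSet ∘ γ) hdisj

namespace IsAllowableGraph

variable {P : Set (Equiv.Perm (Fin n))} {T : Set (Set (Pairs n))}

theorem exists_moveInv_mem (h : IsAllowableGraph P T) (hne : P.Nonempty) (e : Pairs n) :
    ∃ τ ∈ P, ∃ τ' ∈ P, moveInv τ τ' ∈ T ∧ e ∈ moveInv τ τ' := by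
  obtain ⟨σ, hσ⟩ := hne
  obtain ⟨S, hS, hU⟩ := (h.2.1 σ hσ _ (h.1 σ hσ)).exists_moveInv_eq_sUnion
  have he : e ∈ ⋃₀ S := by simp [← hU, moveInv_reversePerm]
  obtain ⟨D, hDS, heD⟩ := he
  obtain ⟨hDT, τ, hτ, τ', hτ', rfl⟩ := hS hDS
  exact ⟨τ, hτ, τ', hτ', hDT, heD⟩

theorem eq_setOf_parallelIn (h : IsAllowableGraph P T) (hne : P.Nonempty) {D : Set (Pairs n)}
    (hD : D ∈ T) {e : Pairs n} (he : e ∈ D) : D = {f | ParallelIn P e f} := by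
  ext f
  rw [Set.mem_ofPred_eq, parallelIn_iff]
  constructor
  · intro hf σ hσ σ' hσ'
    obtain ⟨S, hS, hU⟩ := (h.2.1 σ hσ σ' hσ').exists_moveInv_eq_sUnion
    have hsame : ∀ D' ∈ S, (e ∈ D' ↔ f ∈ D') := fun D' hD' ↦
      (h.2.2 D hD D' (hS hD').1).elim (fun hDD' ↦ hDD' ▸ iff_of_true he hf)
        fun hdis ↦ iff_of_false (Set.disjoint_left.1 hdis he) (Set.disjoint_left.1 hdis hf)
    simp only [hU, Set.mem_sUnion]
    exact exists_congr fun D' ↦ and_congr_right (hsame D')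
  · intro hpar
    obtain ⟨τ, hτ, τ', hτ', hT', he'⟩ := h.exists_moveInv_mem hne e
    rcases h.2.2 D hD _ hT' with rfl | hdis
    · exact (hpar τ hτ τ' hτ').1 he'
    · exact absurd he' (Set.disjoint_left.1 hdis he)

end IsAllowableGraph

end

/-- In an allowable graph of permutations, the inversion sets of the moves of `T`
partition the pair set `E_n`, and they coincide with the parallelism classes of the
set of sign vectors `{X^σ : σ ∈ P}`. -/
theorem moves_are_parallel_classes {n : ℕ} (P : Set (Equiv.Perm (Fin n)))
    (T : Set (Set (Pairs n))) (h : IsAllowableGraph P T) (hne : P.Nonempty) :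
    (∀ e : Pairs n, ∃ D ∈ T, e ∈ D ∧ D = {f | ParallelIn P e f}) ∧
    (∀ D ∈ T, ∀ e ∈ D, D = {f | ParallelIn P e f}) := by
  refine ⟨fun e ↦ ?_, fun D hD e he ↦ h.eq_setOf_parallelIn hne hD he⟩
  obtain ⟨τ, -, τ', -, hT, he⟩ := h.exists_moveInv_mem hne e
  exact ⟨_, hT, he, h.eq_setOf_parallelIn hne hT he⟩
end

section
/- Let Π ⊆ S_n form an allowable graph of permutations. Then the set of sign vectors T_Π = {X^σ : σ ∈ Π} ⊆ {+,-}^{E_n} (where X^σ_{(i,j)} = + iff σ^{-1}(i) < σ^{-1}(j)) is the set of topes of an acycloid: all vectors have full support E_n, T_Π is closed under negation, and for any distinct X, Y ∈ T_Π there exists f in the separation set S(X,Y) such that reorienting X on the parallelism class of f yields an element of T_Π. -/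
open Classical in
/-- Reorientation of a sign vector on a subset of the ground set. -/
noncomputable def reorient {E : Type*} (X : E → SignType) (F : Set E) : E → SignType :=
  fun e => if e ∈ F then -X e else X e

/-- The set of topes associated to an allowable graph of permutations. -/
def topeSet {n : ℕ} (P : Set (Equiv.Perm (Fin n))) : Set (Pairs n → SignType) :=
  {X | ∃ σ ∈ P, X = permSign σ}

/-!
A move from `σ` to `τ` flips exactly the signs on `moveInv σ τ`, so `X^τ` is `X^σ` reoriented on
that set. Given distinct topes `X^σ ≠ X^τ`, take an allowable sequence from `σ` to `τ` and let `D`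
be the inversion set of its first move. Every `f ∈ D` separates `X^σ` and `X^τ`, because the later
moves are disjoint from `D`. The parallelism class of `f` is exactly `D`: a `g` parallel to `f`
flips together with `f` in the first move, and conversely, since every move set in `T` either
contains or misses all of `D`, no move can change whether two elements of `D` have equal signs.
Hence reorienting `X^σ` on the class of `f` gives the tope of the second permutation in the sequence.
-/

theorem Fin.apply_zero_eq_apply_last {β : Type*} {l : ℕ} {u : Fin (l + 1) → β}
    (h : ∀ i : Fin l, u i.castSucc = u i.succ) : u 0 = u (Fin.last l) := by
  rcases (Fin.zero_le (Fin.last l)).eq_or_lt with h0 | h0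
  · rw [h0]
  · exact (Fin.liftFun_iff_succ Eq).2 h h0

section Permutations

variable {n : ℕ}

theorem invSet_injective : Function.Injective (invSet (n := n)) := by
  intro σ τ hστ
  suffices hmono : StrictMono (τ.symm ∘ σ) from
    Equiv.ext fun p => τ.symm_apply_eq.1 hmono.apply_eq
  intro p q hpq
  have hσ : σ.symm (σ p) < σ.symm (σ q) := by simpa using hpq
  have hne : τ.symm (σ p) ≠ τ.symm (σ q) := by simpa using hpq.ne
  rcases lt_or_gt_of_ne (σ.injective.ne hpq.ne) with hlt | hlt
  · have hinv : (⟨(σ p, σ q), hlt⟩ : Pairs n) ∉ invSet τ := hστ ▸ hσ.not_gt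
    exact hne.lt_of_le (not_lt.1 hinv)
  · exact (hστ ▸ hσ : (⟨(σ q, σ p), hlt⟩ : Pairs n) ∈ invSet τ)

theorem moveInv_nonempty {σ τ : Equiv.Perm (Fin n)} (h : σ ≠ τ) : (moveInv σ τ).Nonempty :=
  Set.nonempty_iff_ne_empty.2 fun hempty => h (invSet_injective (symmDiff_eq_bot.1 hempty))

open Classical in
theorem permSign_eq_ite (σ : Equiv.Perm (Fin n)) (e : Pairs n) :
    permSign σ e = if e ∈ invSet σ then -1 else 1 := by
  have hne : σ.symm e.1.1 ≠ σ.symm e.1.2 := σ.symm.injective.ne e.2.ne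
  rcases hne.lt_or_gt with h | h <;> simp [permSign, invSet, h, h.not_gt]

theorem permSign_ne_zero (σ : Equiv.Perm (Fin n)) (e : Pairs n) : permSign σ e ≠ 0 := by
  rw [permSign_eq_ite]; split_ifs <;> decide

theorem permSign_eq_neg_iff_ne (σ τ : Equiv.Perm (Fin n)) (e f : Pairs n) :
    permSign σ e = -permSign τ f ↔ permSign σ e ≠ permSign τ f := by
  rw [permSign_eq_ite, permSign_eq_ite]; split_ifs <;> decide

theorem mem_moveInv_iff {σ τ : Equiv.Perm (Fin n)} {e : Pairs n} :
    e ∈ moveInv σ τ ↔ permSign τ e = -permSign σ e := by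
  rw [moveInv, Set.mem_symmDiff, permSign_eq_ite, permSign_eq_ite]
  by_cases hσ : e ∈ invSet σ <;> by_cases hτ : e ∈ invSet τ <;> simp [hσ, hτ]

theorem permSign_eq_of_notMem_moveInv {σ τ : Equiv.Perm (Fin n)} {e : Pairs n}
    (he : e ∉ moveInv σ τ) : permSign τ e = permSign σ e := by
  rwa [mem_moveInv_iff, permSign_eq_neg_iff_ne, not_not] at he

theorem reorient_permSign_moveInv (σ τ : Equiv.Perm (Fin n)) :
    reorient (permSign σ) (moveInv σ τ) = permSign τ := by
  funext e
  by_cases he : e ∈ moveInv σ τ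
  · rw [reorient, if_pos he, mem_moveInv_iff.1 he]
  · rw [reorient, if_neg he, permSign_eq_of_notMem_moveInv he]

theorem permSign_reversePerm (σ : Equiv.Perm (Fin n)) :
    permSign (reversePerm σ) = -permSign σ := by
  funext e
  have hrev : ∀ x, (reversePerm σ).symm x = Fin.rev (σ.symm x) := fun _ => rfl
  have hne : σ.symm e.1.1 ≠ σ.symm e.1.2 := σ.symm.injective.ne e.2.ne
  rcases hne.lt_or_gt with h | h <;> simp [permSign, hrev, h, h.not_gt]

theorem permSign_last_eq_neg_of_mem_moveInv_zero {l : ℕ} {γ : Fin (l + 2) → Equiv.Perm (Fin n)}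
    (hdisj : ∀ k k' : Fin (l + 1), k ≠ k' →
      Disjoint (moveInv (γ k.castSucc) (γ k.succ)) (moveInv (γ k'.castSucc) (γ k'.succ)))
    {e : Pairs n} (he : e ∈ moveInv (γ 0) (γ 1)) :
    permSign (γ (Fin.last (l + 1))) e = -permSign (γ 0) e := by
  have hlater : ∀ k : Fin l, e ∉ moveInv (γ k.succ.castSucc) (γ k.succ.succ) := fun k =>
    Set.disjoint_left.1 (hdisj 0 k.succ (Fin.succ_ne_zero k).symm) he
  have htail : permSign (γ 1) e = permSign (γ (Fin.last (l + 1))) e :=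
    Fin.apply_zero_eq_apply_last (u := fun k : Fin (l + 1) => permSign (γ k.succ) e)
      fun k => by
        simp only [Fin.succ_castSucc]
        exact (permSign_eq_of_notMem_moveInv (hlater k)).symm
  rw [← htail, mem_moveInv_iff.1 he]

end Permutations

section AllowableGraph

variable {n : ℕ} {P : Set (Equiv.Perm (Fin n))} {T : Set (Set (Pairs n))}

theorem ParallelIn.mem_moveInv {f g : Pairs n} (hfg : ParallelIn P f g)
    {σ τ : Equiv.Perm (Fin n)} (hσ : σ ∈ P) (hτ : τ ∈ P) (hf : f ∈ moveInv σ τ) :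
    g ∈ moveInv σ τ := by
  rw [mem_moveInv_iff] at hf ⊢
  rcases hfg with hfg | hfg
  · rw [← hfg σ hσ, ← hfg τ hτ, hf]
  · rw [← neg_eq_iff_eq_neg.2 (hfg σ hσ), ← neg_eq_iff_eq_neg.2 (hfg τ hτ), hf]

theorem IsAllowableGraph.parallelIn_of_mem (h : IsAllowableGraph P T) {D : Set (Pairs n)}
    (hD : D ∈ T) {f g : Pairs n} (hf : f ∈ D) (hg : g ∈ D) {σ : Equiv.Perm (Fin n)}
    (hσ : σ ∈ P) : ParallelIn P f g := by
  have hstep : ∀ ρ π : Equiv.Perm (Fin n), moveInv ρ π ∈ T →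
      (permSign ρ f = permSign ρ g) = (permSign π f = permSign π g) := by
    intro ρ π hρπ
    rcases h.2.2 D hD _ hρπ with rfl | hdisj
    · rw [mem_moveInv_iff.1 hf, mem_moveInv_iff.1 hg, neg_inj]
    · rw [permSign_eq_of_notMem_moveInv (Set.disjoint_left.1 hdisj hf),
        permSign_eq_of_notMem_moveInv (Set.disjoint_left.1 hdisj hg)]
  have hinv : ∀ π ∈ P, (permSign σ f = permSign σ g ↔ permSign π f = permSign π g) := by
    intro π hπ
    obtain ⟨l, γ, rfl, rfl, -, hmoves, -⟩ := h.2.1 σ hσ π hπ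
    exact (Fin.apply_zero_eq_apply_last (u := fun k => permSign (γ k) f = permSign (γ k) g)
      fun k => hstep _ _ (hmoves k).2).to_iff
  by_cases hσfg : permSign σ f = permSign σ g
  · exact Or.inl fun π hπ => (hinv π hπ).1 hσfg
  · exact Or.inr fun π hπ => (permSign_eq_neg_iff_ne π π f g).2 fun hπfg =>
      hσfg ((hinv π hπ).2 hπfg)

theorem IsAllowableGraph.setOf_parallelIn_eq_moveInv (h : IsAllowableGraph P T)
    {σ τ : Equiv.Perm (Fin n)} (hσ : σ ∈ P) (hτ : τ ∈ P) (hT : moveInv σ τ ∈ T) {f : Pairs n}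
    (hf : f ∈ moveInv σ τ) : {g | ParallelIn P f g} = moveInv σ τ :=
  Set.ext fun _ => ⟨fun hfg => hfg.mem_moveInv hσ hτ hf, fun hg => h.parallelIn_of_mem hT hf hg hσ⟩

end AllowableGraph

/-- For an allowable graph of permutations `P`, the set `T_P = {X^σ : σ ∈ P}` is the
set of topes of an acycloid: (T1) all sign vectors have full support `E_n`, (T2) the
set is closed under negation, and (T3) for distinct `X, Y ∈ T_P` there is `f` in the
separation set `S(X,Y)` such that reorienting `X` on the parallelism class of `f`
again gives an element of `T_P`. -/
theorem allowableGraph_gives_acycloid {n : ℕ} (P : Set (Equiv.Perm (Fin n)))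
    (T : Set (Set (Pairs n))) (h : IsAllowableGraph P T) :
    (∀ X ∈ topeSet P, ∀ e, X e ≠ 0) ∧
    (∀ X ∈ topeSet P, -X ∈ topeSet P) ∧
    (∀ X ∈ topeSet P, ∀ Y ∈ topeSet P, X ≠ Y →
      ∃ f, X f ≠ 0 ∧ X f = -Y f ∧
        reorient X {g | ParallelIn P f g} ∈ topeSet P) := by
  refine ⟨?_, ?_, ?_⟩
  · rintro X ⟨σ, -, rfl⟩ e
    exact permSign_ne_zero σ e
  · rintro X ⟨σ, hσ, rfl⟩
    exact ⟨reversePerm σ, h.1 σ hσ, (permSign_reversePerm σ).symm⟩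
  rintro X ⟨σ, hσ, rfl⟩ Y ⟨τ, hτ, rfl⟩ hXY
  obtain ⟨l, γ, rfl, rfl, hγP, hmoves, hdisj⟩ := h.2.1 σ hσ τ hτ
  cases l with
  | zero => exact absurd rfl hXY
  | succ l =>
    have hfirst : IsMove (γ 0) (γ 1) ∧ moveInv (γ 0) (γ 1) ∈ T := by
      simpa using hmoves 0
    obtain ⟨f, hf⟩ := moveInv_nonempty hfirst.1.1
    refine ⟨f, permSign_ne_zero _ f, ?_, ?_⟩
    · rw [permSign_last_eq_neg_of_mem_moveInv_zero hdisj hf, neg_neg]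
    · rw [h.setOf_parallelIn_eq_moveInv (hγP 0) (hγP 1) hfirst.2 hf, reorient_permSign_moveInv]
      exact ⟨γ 1, hγP 1, rfl⟩
end
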